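/- arXiv:0905.0609 — 9 statements merged into one kernel-verified Lean document; each statement's English description precedes it below -/
import Mathlib

section
/- For every k ≥ 0, the counting function f satisfies the linear recurrence f(k) = (-1)^k · binom(b_0+1, k+1) + ∑_{m=0}^{k-1} (-1)^{m+k+1} · binom(b_{m+1}+1, k-m) · f(m). -/
/-- The number of nondecreasing sequences `0 ≤ a 0 ≤ ⋯ ≤ a n` below the barrier `b`. -/
noncomputable def barrierSeqCount (b : ℕ → ℕ) (n : ℕ) : ℕ :=
  Nat.card {a : Fin (n + 1) → ℕ // Monotone a ∧ ∀ i, a i ≤ b i.1}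

namespace BarrierAux

def dec0 (b : ℕ → ℕ) : ℕ → ℕ := fun n => if n = 0 then b 0 - 1 else b n
def shift (b : ℕ → ℕ) : ℕ → ℕ := fun n => b (n + 1) - b 0

lemma monotone_dec0 {b : ℕ → ℕ} (hb : Monotone b) : Monotone (dec0 b) := by
  intro x y hxy
  have h1 := hb hxy
  have h2 := hb (Nat.zero_le y)
  simp only [dec0]
  split_ifs <;> omega

lemma monotone_shift {b : ℕ → ℕ} (hb : Monotone b) : Monotone (shift b) := by
  intro x y hxy
  exact Nat.sub_le_sub_right (hb (by omega)) _

lemma finite_pred {n : ℕ} (c : Fin n → ℕ) (p : (Fin n → ℕ) → Prop)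
    (hp : ∀ a, p a → ∀ i, a i ≤ c i) : Finite {a // p a} := by
  apply Finite.of_injective
    (fun a => (fun i => (⟨a.1 i, Nat.lt_succ_of_le (hp a.1 a.2 i)⟩ : Fin (c i + 1))))
  intro x y h
  apply Subtype.ext; funext i
  exact congrArg Fin.val (congrFun h i)

instance bsFinite (b : ℕ → ℕ) (n : ℕ) :
    Finite {a : Fin (n+1) → ℕ // Monotone a ∧ ∀ i, a i ≤ b i.1} :=
  finite_pred _ _ (fun a ha i => ha.2 i)

lemma count_zero (b : ℕ → ℕ) : barrierSeqCount b 0 = b 0 + 1 := by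
  rw [barrierSeqCount]
  have e : {a : Fin 1 → ℕ // Monotone a ∧ ∀ i, a i ≤ b i.1} ≃ Fin (b 0 + 1) := by
    refine ⟨fun a => ⟨a.1 0, Nat.lt_succ_of_le (a.2.2 0)⟩,
      fun x => ⟨fun _ => x.1, monotone_const, fun i => ?_⟩, fun a => ?_, fun x => rfl⟩
    · have : i = 0 := Subsingleton.elim _ _
      subst this
      exact Nat.lt_succ_iff.mp x.2
    · apply Subtype.ext; funext i
      have : i = 0 := Subsingleton.elim _ _
      subst this; rfl
  rw [Nat.card_congr e]
  simp

lemma card_split (b : ℕ → ℕ) (m : ℕ) :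
    barrierSeqCount b (m+1) =
      Nat.card {a : Fin (m+2) → ℕ // (Monotone a ∧ ∀ i, a i ≤ b i.1) ∧ a 0 < b 0}
      + Nat.card {a : Fin (m+2) → ℕ // (Monotone a ∧ ∀ i, a i ≤ b i.1) ∧ a 0 = b 0} := by
  haveI := finite_pred (fun i : Fin (m+2) => b i.1)
    (fun a => (Monotone a ∧ ∀ i, a i ≤ b i.1) ∧ a 0 < b 0) (fun a ha i => ha.1.2 i)
  haveI := finite_pred (fun i : Fin (m+2) => b i.1)
    (fun a => (Monotone a ∧ ∀ i, a i ≤ b i.1) ∧ a 0 = b 0) (fun a ha i => ha.1.2 i)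
  rw [barrierSeqCount]
  have e : {a : Fin (m+2) → ℕ // Monotone a ∧ ∀ i, a i ≤ b i.1} ≃
      {a : Fin (m+2) → ℕ // (Monotone a ∧ ∀ i, a i ≤ b i.1) ∧ a 0 < b 0} ⊕
      {a : Fin (m+2) → ℕ // (Monotone a ∧ ∀ i, a i ≤ b i.1) ∧ a 0 = b 0} := by
    refine Equiv.trans ((Equiv.sumCompl (fun x : {a : Fin (m+2) → ℕ //
        Monotone a ∧ ∀ i, a i ≤ b i.1} => x.1 0 = b 0)).symm) ?_
    refine Equiv.sumComm _ _ |>.trans (Equiv.sumCongr ?_ ?_)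
    · refine (Equiv.subtypeSubtypeEquivSubtypeInter
          (fun a : Fin (m+2) → ℕ => Monotone a ∧ ∀ i, a i ≤ b i.1)
          (fun a => ¬ a 0 = b 0)).trans (Equiv.subtypeEquivRight ?_)
      intro a
      constructor
      · rintro ⟨hP, hne⟩
        exact ⟨hP, lt_of_le_of_ne (hP.2 0) hne⟩
      · rintro ⟨hP, hlt⟩
        exact ⟨hP, Nat.ne_of_lt hlt⟩
    · exact Equiv.subtypeSubtypeEquivSubtypeInter
          (fun a : Fin (m+2) → ℕ => Monotone a ∧ ∀ i, a i ≤ b i.1)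
          (fun a => a 0 = b 0)
  rw [Nat.card_congr e, Nat.card_sum]

lemma card_lt (b : ℕ → ℕ) (m : ℕ) (h0 : 0 < b 0) :
    Nat.card {a : Fin (m+2) → ℕ // (Monotone a ∧ ∀ i, a i ≤ b i.1) ∧ a 0 < b 0}
      = barrierSeqCount (dec0 b) (m+1) := by
  rw [barrierSeqCount]
  apply Nat.card_congr (Equiv.subtypeEquivRight ?_)
  intro a
  constructor
  · rintro ⟨⟨hm, hle⟩, hlt⟩
    refine ⟨hm, fun i => ?_⟩
    by_cases hi : i.1 = 0
    · have hi0 : i = 0 := Fin.ext (by simpa using hi)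
      subst hi0
      simp [dec0]
      omega
    · simp only [dec0, hi, if_neg]
      simpa using hle i
  · rintro ⟨hm, hle⟩
    have h00 : a 0 ≤ b 0 - 1 := by simpa [dec0] using hle 0
    refine ⟨⟨hm, fun i => ?_⟩, by omega⟩
    by_cases hi : i.1 = 0
    · have hi0 : i = 0 := Fin.ext (by simpa using hi)
      subst hi0
      have : a 0 ≤ b 0 := by omega
      simpa using this
    · have := hle i
      simp only [dec0, hi, if_neg] at this
      simpa using this

lemma card_lt0 (b : ℕ → ℕ) (m : ℕ) (h0 : b 0 = 0) :
    Nat.card {a : Fin (m+2) → ℕ // (Monotone a ∧ ∀ i, a i ≤ b i.1) ∧ a 0 < b 0} = 0 := by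
  have : IsEmpty {a : Fin (m+2) → ℕ // (Monotone a ∧ ∀ i, a i ≤ b i.1) ∧ a 0 < b 0} :=
    ⟨fun a => by have := a.2.2; omega⟩
  exact Nat.card_of_isEmpty

lemma card_eq_top (b : ℕ → ℕ) (hb : Monotone b) (m : ℕ) :
    Nat.card {a : Fin (m+2) → ℕ // (Monotone a ∧ ∀ i, a i ≤ b i.1) ∧ a 0 = b 0}
      = barrierSeqCount (shift b) m := by
  rw [barrierSeqCount]
  apply Nat.card_congr
  refine ⟨fun a => ⟨fun i => a.1 ⟨i.1 + 1, by omega⟩ - b 0, ?_, ?_⟩,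
    fun a => ⟨fun j => if h : j.1 = 0 then b 0 else a.1 ⟨j.1 - 1, by omega⟩ + b 0, ?_, ?_⟩,
    ?_, ?_⟩
  · -- monotone of image
    intro i j hij
    have hij' : i.1 ≤ j.1 := hij
    exact Nat.sub_le_sub_right (a.2.1.1 (show (⟨i.1+1, by omega⟩ : Fin (m+2)) ≤ ⟨j.1+1, by omega⟩
      from by rw [Fin.mk_le_mk]; omega)) _
  · -- bound of image
    intro i
    have := a.2.1.2 ⟨i.1 + 1, by omega⟩
    exact Nat.sub_le_sub_right this _
  · -- properties of inverse: Monotone ∧ bound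
    constructor
    · intro x y hxy
      have hxy' : x.1 ≤ y.1 := hxy
      by_cases hx : x.1 = 0
      · by_cases hy : y.1 = 0
        · simp [hx, hy]
        · simp only [hx, hy, dif_pos, dif_neg, not_false_iff]
          exact Nat.le_add_left _ _
      · have hy : ¬ y.1 = 0 := by omega
        simp only [hx, hy, dif_neg, not_false_iff]
        have : a.1 ⟨x.1 - 1, by omega⟩ ≤ a.1 ⟨y.1 - 1, by omega⟩ :=
          a.2.1 (by simp [Fin.le_def]; omega)
        omega
    · intro i
      by_cases hi : i.1 = 0
      · simp only [hi, dif_pos]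
        exact le_refl _
      · simp only [hi, dif_neg, not_false_iff]
        have h1 := a.2.2 ⟨i.1 - 1, by omega⟩
        have h2 : b 0 ≤ b (i.1 - 1 + 1) := hb (by omega)
        simp only [shift] at h1
        have : i.1 - 1 + 1 = i.1 := by omega
        rw [this] at h1 h2
        omega
  · -- a 0 = b 0
    simp
  · -- left inverse
    intro a
    apply Subtype.ext
    funext j
    by_cases hj : j.1 = 0
    · have hj0 : j = 0 := Fin.ext (by simpa using hj)
      subst hj0
      simpa using a.2.2.symm
    · simp only [hj, dif_neg, not_false_iff]
      have hle := a.2.1.1 (Fin.zero_le j)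
      rw [a.2.2] at hle
      have hfin : (⟨j.1 - 1 + 1, by omega⟩ : Fin (m+2)) = j := Fin.ext (by simp; omega)
      rw [hfin]
      omega
  · -- right inverse
    intro a
    apply Subtype.ext
    funext i
    simp only []
    have hne : ¬ ((⟨i.1 + 1, by omega⟩ : Fin (m+2)).1 = 0) := by simp
    rw [dif_neg hne]
    simp


lemma split0 (b : ℕ → ℕ) (hb : Monotone b) (m : ℕ) (h0 : b 0 = 0) :
    barrierSeqCount b (m+1) = barrierSeqCount (shift b) m := by
  rw [card_split b m, card_lt0 b m h0, card_eq_top b hb m, zero_add]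

lemma split_pos (b : ℕ → ℕ) (hb : Monotone b) (m : ℕ) (h0 : 0 < b 0) :
    barrierSeqCount b (m+1) = barrierSeqCount (dec0 b) (m+1) + barrierSeqCount (shift b) m := by
  rw [card_split b m, card_lt b m h0, card_eq_top b hb m]

lemma key : ∀ (k N : ℕ) (b : ℕ → ℕ), Monotone b → b 0 = N → ∀ s : ℕ,
    ∑ m ∈ Finset.range (k+1),
      (-1:ℤ)^m * ((b (m+1) + 1 + s).choose (k - m) : ℤ) * (barrierSeqCount b m : ℤ)
    = ((b 0 + 1 + s).choose (k+1) : ℤ) - (s.choose (k+1) : ℤ) := by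
  intro k
  induction k with
  | zero =>
    intro N b hb hN s
    rw [Finset.sum_range_one, count_zero]
    simp [Nat.choose_one_right]
  | succ k ihk =>
    intro N
    induction N with
    | zero =>
      intro b hb h0 s
      have hsb : Monotone (shift b) := monotone_shift hb
      have hshift : ∀ n, shift b n = b (n+1) := by
        intro n; simp [shift, h0]
      rw [Finset.sum_range_succ']
      have hterm : ∀ i ∈ Finset.range (k+1),
          (-1:ℤ)^(i+1) * ((b (i+1+1) + 1 + s).choose (k+1 - (i+1)) : ℤ)
            * (barrierSeqCount b (i+1) : ℤ)
          = -((-1:ℤ)^i * ((shift b (i+1) + 1 + s).choose (k - i) : ℤ)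
            * (barrierSeqCount (shift b) i : ℤ)) := by
        intro i _
        rw [split0 b hb i h0, hshift (i+1), Nat.succ_sub_succ]
        ring
      rw [Finset.sum_congr rfl hterm, Finset.sum_neg_distrib,
        ihk (shift b 0) (shift b) hsb rfl s, count_zero, h0, hshift 0]
      simp only [Nat.sub_zero, zero_add]
      have hpas : (((1:ℕ)+s).choose (k+1+1) : ℤ)
          = (s.choose (k+1) : ℤ) + (s.choose (k+1+1) : ℤ) := by
        rw [show (1:ℕ)+s = s+1 by omega]
        exact_mod_cast Nat.choose_succ_succ s (k+1)
      rw [hpas]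
      ring
    | succ N ihN =>
      intro b hb h0 s
      have hd : Monotone (dec0 b) := monotone_dec0 hb
      have hs : Monotone (shift b) := monotone_shift hb
      have hshift : ∀ n, shift b n + b 0 = b (n+1) := by
        intro n
        have : b 0 ≤ b (n+1) := hb (by omega)
        simp [shift]; omega
      have hsplit : ∀ m ∈ Finset.range (k+2),
          (-1:ℤ)^m * ((b (m+1) + 1 + s).choose (k+1 - m) : ℤ) * (barrierSeqCount b m : ℤ)
          = (-1:ℤ)^m * ((dec0 b (m+1) + 1 + s).choose (k+1 - m) : ℤ)
              * (barrierSeqCount (dec0 b) m : ℤ)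
            + (-1:ℤ)^m * ((b (m+1) + 1 + s).choose (k+1 - m) : ℤ)
              * (if m = 0 then 1 else (barrierSeqCount (shift b) (m-1) : ℤ)) := by
        intro m _
        have hdec : dec0 b (m+1) = b (m+1) := by simp [dec0]
        rw [hdec]
        rcases m with _ | j
        · simp only [if_pos rfl]
          rw [count_zero, count_zero]
          have : dec0 b 0 = b 0 - 1 := by simp [dec0]
          rw [this, h0]
          push_cast
          ring
        · simp only [Nat.succ_ne_zero, if_neg, not_false_iff]
          rw [split_pos b hb j (by omega)]
          push_cast
          ring
      rw [Finset.sum_congr rfl hsplit, Finset.sum_add_distrib]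
      have h1 : ∑ m ∈ Finset.range (k+2),
          (-1:ℤ)^m * ((dec0 b (m+1) + 1 + s).choose (k+1 - m) : ℤ)
            * (barrierSeqCount (dec0 b) m : ℤ)
          = (((N : ℕ) + 1 + s).choose (k+1+1) : ℤ) - (s.choose (k+1+1) : ℤ) := by
        have hd0 : dec0 b 0 = N := by simp [dec0, h0]
        have := ihN (dec0 b) hd hd0 s
        rw [hd0] at this
        exact this
      rw [h1]
      have h2 : ∑ m ∈ Finset.range (k+2),
          (-1:ℤ)^m * ((b (m+1) + 1 + s).choose (k+1 - m) : ℤ)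
            * (if m = 0 then 1 else (barrierSeqCount (shift b) (m-1) : ℤ))
          = ((s + (N+1)).choose (k+1) : ℤ) := by
        rw [Finset.sum_range_succ']
        have hterm : ∀ i ∈ Finset.range (k+1),
            (-1:ℤ)^(i+1) * ((b (i+1+1) + 1 + s).choose (k+1 - (i+1)) : ℤ)
              * (if i+1 = 0 then 1 else (barrierSeqCount (shift b) (i+1-1) : ℤ))
            = -((-1:ℤ)^i * ((shift b (i+1) + 1 + (s + (N+1))).choose (k - i) : ℤ)
              * (barrierSeqCount (shift b) i : ℤ)) := by
          intro i _
          have harg : b (i+1+1) + 1 + s = shift b (i+1) + 1 + (s + (N+1)) := by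
            have := hshift (i+1)
            omega
          rw [harg, Nat.succ_sub_succ, if_neg (by omega : ¬ (i+1 = 0))]
          simp only [Nat.add_sub_cancel]
          ring
        rw [Finset.sum_congr rfl hterm, Finset.sum_neg_distrib,
          ihk (shift b 0) (shift b) hs rfl (s + (N+1))]
        have hb1 : shift b 0 + 1 + (s + (N+1)) = b 1 + 1 + s := by
          have := hshift 0
          norm_num at this
          omega
        rw [hb1, if_pos rfl]
        simp only [Nat.sub_zero, zero_add, pow_zero, one_mul, mul_one]
        ring
      rw [h2, h0]
      have hpas : (((N:ℕ)+1+s+1).choose (k+1+1) : ℤ)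
          = ((N+1+s).choose (k+1) : ℤ) + ((N+1+s).choose (k+1+1) : ℤ) := by
        exact_mod_cast Nat.choose_succ_succ (N+1+s) (k+1)
      have e1 : (N:ℕ)+1+1+s = N+1+s+1 := by omega
      have e2 : s + (N+1) = N+1+s := by omega
      rw [e1, e2, hpas]
      ring

end BarrierAux

theorem stmt_3 (b : ℕ → ℕ) (hb : Monotone b) (k : ℕ) :
    (barrierSeqCount b k : ℤ) =
      (-1) ^ k * ((b 0 + 1).choose (k + 1) : ℤ) +
        ∑ m ∈ Finset.range k,
          (-1) ^ (m + k + 1) * ((b (m + 1) + 1).choose (k - m) : ℤ) *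
            (barrierSeqCount b m : ℤ) := by
  have h := BarrierAux.key k (b 0) b hb rfl 0
  simp only [add_zero, Nat.choose_eq_zero_of_lt (Nat.zero_lt_succ k), Nat.cast_zero,
    sub_zero] at h
  rw [Finset.sum_range_succ] at h
  simp only [Nat.sub_self, Nat.choose_zero_right, Nat.cast_one, mul_one] at h
  have hrw : ∑ m ∈ Finset.range k,
      (-1:ℤ) ^ (m + k + 1) * ((b (m + 1) + 1).choose (k - m) : ℤ) * (barrierSeqCount b m : ℤ)
      = (-1:ℤ)^(k+1) * ∑ m ∈ Finset.range k,
        (-1:ℤ) ^ m * ((b (m + 1) + 1).choose (k - m) : ℤ) * (barrierSeqCount b m : ℤ) := by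
    rw [Finset.mul_sum]
    apply Finset.sum_congr rfl
    intro i _
    rw [show i + k + 1 = i + (k+1) by omega, pow_add]
    ring
  rw [hrw]
  have hsq : ((-1:ℤ)^k) * ((-1:ℤ)^k) = 1 := by
    rw [← pow_add, ← two_mul, pow_mul]
    norm_num
  linear_combination ((-1:ℤ)^k) * h - (barrierSeqCount b k : ℤ) * hsq
end

section
/- In the ring of formal power series (equivalently, as an identity of polynomial coefficients for each fixed power of x), 1 = (1-x)^{1+b_0} + ∑_{n ≥ 0} f(n) · x^{n+1} · (1-x)^{1+b_{n+1}}; concretely, for every N ≥ 1 the coefficient of x^N in (1-x)^{1+b_0} + ∑_{n=0}^{N-1} f(n) x^{n+1} (1-x)^{1+b_{n+1}} equals 0. -/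
theorem Nat.card_subtype_le_eq_sum_card_eq {α : Type*} [Finite α] (g : α → ℕ) (k : ℕ) :
    Nat.card {x // g x ≤ k} = ∑ j ∈ Finset.range (k + 1), Nat.card {x // g x = j} := by
  induction k with
  | zero => simp only [nonpos_iff_eq_zero, zero_add, Finset.sum_range_one]
  | succ k ih =>
    classical
    rw [Finset.sum_range_succ, ← ih, ← Nat.card_sum]
    refine Nat.card_congr ((Equiv.subtypeEquivRight fun x => Nat.le_succ_iff).trans
      (subtypeOrEquiv _ _ ?_))
    exact Pi.disjoint_iff.2 fun x => by simp only [Prop.disjoint_iff]; omega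

theorem Fin.monotone_snoc {n : ℕ} {α : Type*} [Preorder α] {f : Fin (n + 1) → α}
    (hf : Monotone f) {x : α} (hx : f (Fin.last n) ≤ x) :
    Monotone (Fin.snoc f x : Fin (n + 2) → α) := by
  simpa only [Fin.insertNth_last'] using Fin.insertNth_last_monotone hf x hx

abbrev BarrierSeq (b : ℕ → ℕ) (n : ℕ) : Type :=
  {a : Fin (n + 1) → ℕ // Monotone a ∧ ∀ i, a i ≤ b i.1}

namespace BarrierSeq

variable {b : ℕ → ℕ} {n : ℕ}

instance : Finite (BarrierSeq b n) :=
  Finite.of_injective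
    (fun a (i : Fin (n + 1)) => (⟨a.1 i, Nat.lt_succ_of_le (a.2.2 i)⟩ : Fin (b i.1 + 1)))
    fun _ _ h => Subtype.ext (funext fun i => congrArg Fin.val (congrFun h i))

abbrev last (a : BarrierSeq b n) : ℕ := a.1 (Fin.last n)

theorem last_le (a : BarrierSeq b n) : a.last ≤ b n := a.2.2 (Fin.last n)

def init (a : BarrierSeq b (n + 1)) : BarrierSeq b n :=
  ⟨Fin.init a.1, a.2.1.comp Fin.strictMono_castSucc.monotone, fun i => a.2.2 i.castSucc⟩

theorem init_last_le (a : BarrierSeq b (n + 1)) : a.init.last ≤ a.last :=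
  a.2.1 (Fin.le_last _)

def snoc (a : BarrierSeq b n) {k : ℕ} (hak : a.last ≤ k) (hk : k ≤ b (n + 1)) :
    BarrierSeq b (n + 1) :=
  ⟨Fin.snoc a.1 k, Fin.monotone_snoc a.2.1 hak,
    Fin.lastCases (by simpa using hk) fun i => by simpa using a.2.2 i⟩

def initEquiv {k : ℕ} (hk : k ≤ b (n + 1)) :
    {a : BarrierSeq b (n + 1) // a.last = k} ≃ {a : BarrierSeq b n // a.last ≤ k} where
  toFun a := ⟨a.1.init, a.1.init_last_le.trans a.2.le⟩
  invFun a := ⟨a.1.snoc a.2 hk, Fin.snoc_last (α := fun _ => ℕ) _ _⟩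
  left_inv a := by
    obtain ⟨⟨a, _⟩, rfl⟩ := a
    exact Subtype.ext (Subtype.ext (Fin.snoc_init_self a))
  right_inv a := Subtype.ext (Subtype.ext (Fin.init_snoc (α := fun _ => ℕ) _ _))

end BarrierSeq

noncomputable def barrierSeqLastCount (b : ℕ → ℕ) (n k : ℕ) : ℕ :=
  Nat.card {a : BarrierSeq b n // a.last = k}

section Counting

variable {b : ℕ → ℕ} {n : ℕ}

theorem card_barrierSeq_last_le (k : ℕ) :
    Nat.card {a : BarrierSeq b n // a.last ≤ k} =
      ∑ j ∈ Finset.range (k + 1), barrierSeqLastCount b n j :=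
  Nat.card_subtype_le_eq_sum_card_eq _ k

theorem barrierSeqCount_eq_sum_barrierSeqLastCount {K : ℕ} (hK : b n ≤ K) :
    barrierSeqCount b n = ∑ j ∈ Finset.range (K + 1), barrierSeqLastCount b n j := by
  rw [← card_barrierSeq_last_le]
  exact (Nat.card_congr (Equiv.subtypeUnivEquiv fun a => (BarrierSeq.last_le a).trans hK)).symm

theorem barrierSeqLastCount_eq_zero {k : ℕ} (hk : b n < k) : barrierSeqLastCount b n k = 0 :=
  have : IsEmpty {a : BarrierSeq b n // a.last = k} := ⟨fun a => by have := a.1.last_le; omega⟩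
  Nat.card_of_isEmpty

theorem barrierSeqLastCount_zero {k : ℕ} (hk : k ≤ b 0) : barrierSeqLastCount b 0 k = 1 := by
  refine Nat.card_eq_one_iff_exists.2 ⟨⟨⟨fun _ => k, monotone_const, fun i => ?_⟩, rfl⟩, ?_⟩
  · simpa [Fin.fin_one_eq_zero i] using hk
  · rintro ⟨⟨a, _⟩, rfl⟩
    exact Subtype.ext (Subtype.ext (funext fun i => by rw [Fin.fin_one_eq_zero i]; rfl))

theorem barrierSeqLastCount_succ {k : ℕ} (hk : k ≤ b (n + 1)) :
    barrierSeqLastCount b (n + 1) k = ∑ j ∈ Finset.range (k + 1), barrierSeqLastCount b n j := by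
  rw [← card_barrierSeq_last_le]
  exact Nat.card_congr (BarrierSeq.initEquiv hk)

end Counting

section Identity

variable {R : Type*} [CommRing R] (b : ℕ → ℕ)

noncomputable def barrierSeqLastGen (n : ℕ) (y : R) : R :=
  ∑ k ∈ Finset.range (b n + 1), (barrierSeqLastCount b n k : R) * y ^ k

variable {b}

theorem sum_range_barrierSeqLastCount_mul {n K : ℕ} (hK : b n ≤ K) (g : ℕ → R) :
    ∑ k ∈ Finset.range (K + 1), (barrierSeqLastCount b n k : R) * g k =
      ∑ k ∈ Finset.range (b n + 1), (barrierSeqLastCount b n k : R) * g k := by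
  refine (Finset.sum_subset (Finset.range_subset_range.2 (by omega)) fun k _ hk => ?_).symm
  rw [barrierSeqLastCount_eq_zero (by simpa using hk), Nat.cast_zero, zero_mul]

theorem barrierSeqLastGen_zero (y : R) :
    barrierSeqLastGen b 0 y = ∑ k ∈ Finset.range (b 0 + 1), y ^ k :=
  Finset.sum_congr rfl fun k hk => by
    rw [barrierSeqLastCount_zero (Finset.mem_range_succ_iff.1 hk), Nat.cast_one, one_mul]

theorem mul_barrierSeqLastGen_succ {n : ℕ} (hb : b n ≤ b (n + 1)) (x : R) :
    x * barrierSeqLastGen b (n + 1) (1 - x) =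
      barrierSeqLastGen b n (1 - x) - barrierSeqCount b n * (1 - x) ^ (b (n + 1) + 1) := by
  set M := b (n + 1)
  set y := 1 - x
  calc x * barrierSeqLastGen b (n + 1) y
      = ∑ m ∈ Finset.range (M + 1), ∑ j ∈ Finset.range (m + 1),
          x * ((barrierSeqLastCount b n j : R) * y ^ m) := by
        rw [barrierSeqLastGen, Finset.mul_sum]
        refine Finset.sum_congr rfl fun m hm => ?_
        rw [barrierSeqLastCount_succ (Finset.mem_range_succ_iff.1 hm), Nat.cast_sum,
          Finset.sum_mul, Finset.mul_sum]
    _ = ∑ j ∈ Finset.range (M + 1), ∑ m ∈ Finset.Ico j (M + 1),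
          x * ((barrierSeqLastCount b n j : R) * y ^ m) :=
        Finset.sum_comm' fun m j => by simp only [Finset.mem_range, Finset.mem_Ico]; omega
    _ = ∑ j ∈ Finset.range (M + 1), (barrierSeqLastCount b n j : R) * (y ^ j - y ^ (M + 1)) := by
        refine Finset.sum_congr rfl fun j hj => ?_
        rw [← geom_sum_Ico_mul_neg y (Finset.mem_range.1 hj).le, Finset.sum_mul,
          Finset.mul_sum]
        exact Finset.sum_congr rfl fun m _ => by ring
    _ = barrierSeqLastGen b n y - barrierSeqCount b n * y ^ (M + 1) := by
        simp only [mul_sub, Finset.sum_sub_distrib, ← Finset.sum_mul]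
        rw [sum_range_barrierSeqLastCount_mul hb, barrierSeqCount_eq_sum_barrierSeqLastCount hb,
          Nat.cast_sum, barrierSeqLastGen]

theorem barrierSeqCount_partialSum_eq (hb : Monotone b) (x : R) (N : ℕ) :
    (1 - x) ^ (1 + b 0) +
        ∑ n ∈ Finset.range N,
          (barrierSeqCount b n : R) * (x ^ (n + 1) * (1 - x) ^ (1 + b (n + 1))) =
      1 - x ^ (N + 1) * barrierSeqLastGen b N (1 - x) := by
  induction N with
  | zero =>
    rw [Finset.sum_range_zero, add_zero, zero_add, pow_one, barrierSeqLastGen_zero]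
    linear_combination mul_neg_geom_sum (1 - x) (b 0 + 1)
  | succ N ih =>
    rw [Finset.sum_range_succ, ← add_assoc, ih]
    linear_combination x ^ (N + 1) * mul_barrierSeqLastGen_succ (hb N.le_succ) x

end Identity

open Polynomial in
theorem stmt_4 (b : ℕ → ℕ) (hb : Monotone b) (N : ℕ) (hN : 1 ≤ N) :
    ((1 - X) ^ (1 + b 0) +
        ∑ n ∈ Finset.range N,
          (barrierSeqCount b n : ℤ) • (X ^ (n + 1) * (1 - X) ^ (1 + b (n + 1))) :
      Polynomial ℤ).coeff N = 0 := by
  simp only [natCast_zsmul, nsmul_eq_mul]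
  rw [barrierSeqCount_partialSum_eq hb, coeff_sub, coeff_one, coeff_X_pow_mul', if_neg (by omega),
    if_neg (by omega), sub_zero]
end

section
/- For every N ≥ 1, the coefficient identity (-1)^{N} · binom(b_0+1, N) + ∑_{m=0}^{N-1} f(m) · (-1)^{N-1-m} · binom(b_{m+1}+1, N-1-m) = 0 holds; equivalently the two-variable generating function identity (1-x-t)·C(x,t) = 1 - t^{1+b_0} - ∑_{m>0} f(m-1) x^m t^{1+b_m} holds coefficientwise. -/
/-- The number of nondecreasing sequences `0 ≤ a 0 ≤ ⋯ ≤ a m` below the barrier `b`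
with last term exactly `j`. -/
noncomputable def barrierCount (b : ℕ → ℕ) (m j : ℕ) : ℕ :=
  Nat.card {a : Fin (m + 1) → ℕ // Monotone a ∧ (∀ i, a i ≤ b i.1) ∧ a (Fin.last m) = j}

open Finset

theorem Fin.monotone_snoc_iff {α : Type*} [Preorder α] {n : ℕ} {a : Fin (n + 1) → α} {x : α} :
    Monotone (Fin.snoc a x : Fin (n + 2) → α) ↔ Monotone a ∧ a (Fin.last n) ≤ x := by
  simp [Fin.monotone_iff_le_succ, Fin.forall_fin_succ', Fin.succ_castSucc, -Fin.castSucc_succ]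

theorem Nat.card_subtype_le_eq_sum {α : Type*} (p : α → Prop) (g : α → ℕ) (j : ℕ)
    [∀ i, Finite {x // p x ∧ g x = i}] :
    Nat.card {x // p x ∧ g x ≤ j} = ∑ i ∈ range (j + 1), Nat.card {x // p x ∧ g x = i} := by
  rw [← Fin.sum_univ_eq_sum_range, ← Nat.card_sigma]
  exact Nat.card_congr
    { toFun x := ⟨⟨g x.1, Nat.lt_succ_of_le x.2.2⟩, x.1, x.2.1, rfl⟩
      invFun y := ⟨y.2.1, y.2.2.1, by have := y.1.2; have := y.2.2.2; omega⟩
      left_inv x := rfl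
      right_inv y := Sigma.subtype_ext (Fin.ext y.2.2.2) rfl }

def Fin.snocFiberEquiv {α : Type*} {n : ℕ} (p : (Fin (n + 1) → α) → Prop) (x : α) :
    {a // p a ∧ a (Fin.last n) = x} ≃ {a : Fin n → α // p (Fin.snoc a x)} where
  toFun a := ⟨Fin.init a.1, by simpa [← a.2.2] using a.2.1⟩
  invFun a := ⟨Fin.snoc a.1 x, a.2, Fin.snoc_last _ _⟩
  left_inv a := by
    obtain ⟨a, -, rfl⟩ := a
    simp
  right_inv a := by simp

theorem finite_subtype_of_forall_le {ι : Type*} [Fintype ι] [DecidableEq ι] (c : ι → ℕ)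
    {p : (ι → ℕ) → Prop} (h : ∀ a, p a → a ≤ c) : Finite {a // p a} :=
  ((Set.finite_Iic c).subset h).to_subtype

theorem Nat.sum_Ico_choose_add_choose {i n : ℕ} (h : i ≤ n) (k : ℕ) :
    ∑ j ∈ Ico i n, j.choose k + i.choose (k + 1) = n.choose (k + 1) := by
  induction n, h using Nat.le_induction with
  | base => simp
  | succ n hin ih => rw [sum_Ico_succ_top hin, add_right_comm, ih, Nat.choose_succ_succ', add_comm]

section Barrier

variable (b : ℕ → ℕ)

instance (m j : ℕ) :
    Finite {a : Fin (m + 1) → ℕ // (Monotone a ∧ ∀ i, a i ≤ b i) ∧ a (Fin.last m) = j} :=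
  finite_subtype_of_forall_le (fun i : Fin (m + 1) => b i) fun _ ha => ha.1.2

variable {b}

theorem barrierCount_eq_zero_of_lt {m j : ℕ} (h : b m < j) : barrierCount b m j = 0 := by
  rw [barrierCount, Nat.card_eq_zero]
  exact Or.inl ⟨fun ⟨a, _, hab, ha⟩ => by simpa [ha] using (hab (Fin.last m)).trans_lt h⟩

theorem barrierCount_zero_left_of_le {j : ℕ} (h : j ≤ b 0) : barrierCount b 0 j = 1 := by
  rw [barrierCount, Nat.card_eq_one_iff_unique]
  refine ⟨⟨fun x y => Subtype.ext (funext fun i => ?_)⟩, ⟨⟨fun _ => j, monotone_const, ?_, rfl⟩⟩⟩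
  · rw [Fin.fin_one_eq_zero i, ← Fin.last_zero, x.2.2.2, y.2.2.2]
  · simpa [Fin.fin_one_eq_zero] using h

theorem barrierCount_zero_left (j : ℕ) : barrierCount b 0 j = if j ≤ b 0 then 1 else 0 := by
  split_ifs with h
  · exact barrierCount_zero_left_of_le h
  · exact barrierCount_eq_zero_of_lt (not_le.mp h)

theorem barrierCount_succ_left {m j : ℕ} (h : j ≤ b (m + 1)) :
    barrierCount b (m + 1) j = ∑ i ∈ range (j + 1), barrierCount b m i := by
  simp only [barrierCount, ← and_assoc]
  rw [Nat.card_congr (Fin.snocFiberEquiv _ j), ← Nat.card_subtype_le_eq_sum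
    (fun a : Fin (m + 1) → ℕ => Monotone a ∧ ∀ i, a i ≤ b i) (fun a => a (Fin.last m))]
  exact Nat.card_congr <| Equiv.subtypeEquivRight fun a => by
    simp only [Fin.monotone_snoc_iff, Fin.forall_fin_succ', Fin.snoc_castSucc, Fin.val_castSucc,
      Fin.val_last, Fin.snoc_last, h, and_true]
    exact and_right_comm

theorem barrierSeqCount_eq_sum {m j : ℕ} (h : b m ≤ j) :
    barrierSeqCount b m = ∑ i ∈ range (j + 1), barrierCount b m i := by
  simp only [barrierCount, ← and_assoc]
  rw [← Nat.card_subtype_le_eq_sum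
    (fun a : Fin (m + 1) → ℕ => Monotone a ∧ ∀ i, a i ≤ b i) (fun a => a (Fin.last m))]
  exact Nat.card_congr <| Equiv.subtypeEquivRight fun a =>
    ⟨fun ha => ⟨ha, (ha.2 _).trans (by simpa using h)⟩, And.left⟩

end Barrier

section Moment
variable {b : ℕ → ℕ}

noncomputable def binomialMoment (b : ℕ → ℕ) (m k : ℕ) : ℕ :=
  ∑ j ∈ range (b m + 1), barrierCount b m j * j.choose k

theorem binomialMoment_eq_sum_range {m n : ℕ} (h : b m < n) (k : ℕ) :
    binomialMoment b m k = ∑ j ∈ range n, barrierCount b m j * j.choose k := by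
  refine sum_subset (range_subset_range.mpr h) fun j _ hj => ?_
  rw [barrierCount_eq_zero_of_lt (by simpa using hj), zero_mul]

theorem binomialMoment_zero_left (k : ℕ) : binomialMoment b 0 k = (b 0 + 1).choose (k + 1) := by
  rw [binomialMoment, ← Nat.sum_Ico_choose_add_choose (Nat.zero_le _), ← range_eq_Ico,
    Nat.choose_zero_succ, add_zero]
  refine sum_congr rfl fun j hj => ?_
  rw [barrierCount_zero_left_of_le (Nat.le_of_lt_succ (mem_range.mp hj)), one_mul]

theorem binomialMoment_zero_right (m : ℕ) : binomialMoment b m 0 = barrierSeqCount b m := by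
  simp [binomialMoment, barrierSeqCount_eq_sum le_rfl]

theorem binomialMoment_add_binomialMoment_succ {m : ℕ} (hb : b m ≤ b (m + 1)) (k : ℕ) :
    binomialMoment b m (k + 1) + binomialMoment b (m + 1) k =
      barrierSeqCount b m * (b (m + 1) + 1).choose (k + 1) := by
  set B := b (m + 1)
  calc binomialMoment b m (k + 1) + binomialMoment b (m + 1) k
      = ∑ i ∈ range (B + 1), barrierCount b m i * i.choose (k + 1) +
          ∑ j ∈ range (B + 1), ∑ i ∈ range (j + 1), barrierCount b m i * j.choose k := by
        rw [binomialMoment_eq_sum_range (Nat.lt_succ_of_le hb), binomialMoment]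
        refine congrArg _ (sum_congr rfl fun j hj => ?_)
        rw [barrierCount_succ_left (Nat.le_of_lt_succ (mem_range.mp hj)), sum_mul]
    _ = ∑ i ∈ range (B + 1), barrierCount b m i *
          (∑ j ∈ Ico i (B + 1), j.choose k + i.choose (k + 1)) := by
        simp only [range_eq_Ico, ← sum_Ico_Ico_comm, mul_add, mul_sum, sum_add_distrib, add_comm]
    _ = barrierSeqCount b m * (B + 1).choose (k + 1) := by
        rw [barrierSeqCount_eq_sum hb, sum_mul]
        refine sum_congr rfl fun i hi => ?_
        rw [Nat.sum_Ico_choose_add_choose (mem_range.mp hi).le]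

end Moment

section Identity
variable {b : ℕ → ℕ}

theorem alternating_sum_binomialMoment (hb : Monotone b) (n k : ℕ) :
    (-1 : ℤ) ^ (n + 1) * ((b 0 + 1).choose (n + 1 + k) : ℤ) +
        ∑ m ∈ range n, (barrierSeqCount b m : ℤ) * (-1) ^ (n - m) *
          ((b (m + 1) + 1).choose (n - m + k) : ℤ) +
        binomialMoment b n k = 0 := by
  induction n generalizing k with
  | zero => simp [binomialMoment_zero_left, add_comm 1 k]
  | succ n ih =>
    have hstep : (binomialMoment b n (k + 1) + binomialMoment b (n + 1) k : ℤ) =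
        barrierSeqCount b n * ((b (n + 1) + 1).choose (k + 1) : ℤ) := by
      exact_mod_cast binomialMoment_add_binomialMoment_succ (hb n.le_succ) k
    have hsum : ∑ m ∈ range n, (barrierSeqCount b m : ℤ) * (-1) ^ (n + 1 - m) *
          ((b (m + 1) + 1).choose (n + 1 - m + k) : ℤ) =
        -∑ m ∈ range n, (barrierSeqCount b m : ℤ) * (-1) ^ (n - m) *
          ((b (m + 1) + 1).choose (n - m + (k + 1)) : ℤ) := by
      rw [← sum_neg_distrib]
      refine sum_congr rfl fun m hm => ?_
      have hm : m < n := mem_range.mp hm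
      rw [show n + 1 - m = n - m + 1 by omega, show n - m + 1 + k = n - m + (k + 1) by omega,
        pow_succ]
      ring
    rw [sum_range_succ, hsum, Nat.add_sub_cancel_left, add_comm 1 k,
      show n + 1 + 1 + k = n + 1 + (k + 1) by ring]
    linear_combination -ih (k + 1) + hstep

theorem barrierCount_recurrence (hb : Monotone b) (m j : ℕ) :
    (barrierCount b m j : ℤ) - (if m = 0 then 0 else (barrierCount b (m - 1) j : ℤ)) -
        (if j = 0 then 0 else (barrierCount b m (j - 1) : ℤ)) =
      (if m = 0 ∧ j = 0 then 1 else 0) - (if m = 0 ∧ j = b 0 + 1 then 1 else 0) -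
        (if 0 < m ∧ j = b m + 1 then (barrierSeqCount b (m - 1) : ℤ) else 0) := by
  rcases m with _ | m
  · rcases j with _ | j
    · simp [barrierCount_zero_left]
    · simp only [barrierCount_zero_left, Order.add_one_le_iff, Nat.cast_ite, Nat.cast_one,
        CharP.cast_eq_zero, ↓reduceIte, sub_zero, Nat.add_eq_zero_iff, one_ne_zero, and_false,
        add_tsub_cancel_right, Nat.add_right_cancel_iff, true_and, zero_sub, lt_self_iff_false,
        false_and]
      split_ifs <;> omega
  rcases j with _ | j
  · simp [barrierCount_succ_left (Nat.zero_le _)]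
  have hbm : b m ≤ b (m + 1) := hb m.le_succ
  simp only [add_eq_zero, one_ne_zero, and_false, false_and, if_false, Nat.add_sub_cancel,
    Nat.succ_pos, true_and, add_left_inj]
  rcases lt_trichotomy j (b (m + 1)) with h | rfl | h
  · rw [if_neg h.ne, barrierCount_succ_left h, barrierCount_succ_left h.le, sum_range_succ]
    push_cast
    ring
  · rw [if_pos rfl, barrierCount_eq_zero_of_lt (Nat.lt_succ_self _),
      barrierCount_eq_zero_of_lt (Nat.lt_succ_of_le hbm), barrierCount_succ_left le_rfl,
      ← barrierSeqCount_eq_sum hbm]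
    ring
  · rw [if_neg h.ne', barrierCount_eq_zero_of_lt (h.trans (Nat.lt_succ_self _)),
      barrierCount_eq_zero_of_lt (by omega), barrierCount_eq_zero_of_lt h]
    simp

end Identity

theorem stmt_5 (b : ℕ → ℕ) (hb : Monotone b) :
    (∀ N : ℕ, 1 ≤ N →
        (-1 : ℤ) ^ N * ((b 0 + 1).choose N : ℤ) +
          ∑ m ∈ Finset.range N,
            (barrierSeqCount b m : ℤ) * (-1) ^ (N - 1 - m) *
              ((b (m + 1) + 1).choose (N - 1 - m) : ℤ) = 0) ∧
      ∀ m j : ℕ,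
        (barrierCount b m j : ℤ) - (if m = 0 then 0 else (barrierCount b (m - 1) j : ℤ)) -
            (if j = 0 then 0 else (barrierCount b m (j - 1) : ℤ)) =
          (if m = 0 ∧ j = 0 then 1 else 0) - (if m = 0 ∧ j = b 0 + 1 then 1 else 0) -
            (if 0 < m ∧ j = b m + 1 then (barrierSeqCount b (m - 1) : ℤ) else 0) := by
  refine ⟨fun N hN => ?_, barrierCount_recurrence hb⟩
  obtain ⟨n, rfl⟩ := Nat.exists_eq_add_of_le' hN
  simpa [sum_range_succ, binomialMoment_zero_right, add_assoc] using
    alternating_sum_binomialMoment hb n 0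
end

section
/- If the barrier is linear, b_j = r·j + s for fixed nonnegative integers r, s, then the number of nondecreasing integer sequences 0 ≤ a_0 ≤ ... ≤ a_n with a_j ≤ r·j + s for all j equals ((s+1)/(n+1)) · binom(s + (n+1)(r+1), n). -/
instance barrierFinite (b : ℕ → ℕ) (n : ℕ) :
    Finite {a : Fin (n + 1) → ℕ // Monotone a ∧ ∀ i, a i ≤ b i.1} := by
  have h : {a : Fin (n + 1) → ℕ | Monotone a ∧ ∀ i, a i ≤ b i.1}.Finite := by
    apply Set.Finite.subset (Set.Finite.pi (fun i : Fin (n+1) => Set.finite_Iic (b i.1)))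
    intro a ha
    simp only [Set.mem_pi, Set.mem_Iic, Set.mem_univ, forall_true_left]
    exact fun i => ha.2 i
  exact h.to_subtype

def baseEquiv (b : ℕ → ℕ) : {a : Fin 1 → ℕ // Monotone a ∧ ∀ i, a i ≤ b i.1} ≃ Fin (b 0 + 1) where
  toFun a := ⟨a.1 0, by have := a.2.2 0; simp at this ⊢; omega⟩
  invFun k := ⟨fun _ => k.1, monotone_const, fun i => by
    have : i = 0 := Subsingleton.elim _ _
    subst this; exact Nat.lt_succ_iff.mp k.2⟩
  left_inv a := by
    apply Subtype.ext; funext i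
    have : i = 0 := Subsingleton.elim _ _
    subst this; rfl
  right_inv k := rfl

lemma barrier_base (b : ℕ → ℕ) : barrierSeqCount b 0 = b 0 + 1 := by
  unfold barrierSeqCount
  rw [Nat.card_congr (baseEquiv b)]
  simp

def pre (n : ℕ) (c : Fin (n + 1) → ℕ) : Fin (n + 2) → ℕ :=
  fun i => if h : i.1 = 0 then 0 else c ⟨i.1 - 1, by omega⟩

lemma pre_mono (n : ℕ) (c : Fin (n + 1) → ℕ) (hc : Monotone c) : Monotone (pre n c) := by
  intro i j hij
  unfold pre
  by_cases hi : i.1 = 0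
  · simp [hi]
  · have hj : j.1 ≠ 0 := by have : i.1 ≤ j.1 := hij; omega
    simp only [hi, hj, dif_neg, not_false_iff]
    exact hc (by simp only [Fin.mk_le_mk]; have : i.1 ≤ j.1 := hij; omega)

/-- Splitting lemma: if the barrier is everywhere positive, split on whether `a 0 = 0`. -/
lemma barrier_split (b : ℕ → ℕ) (n : ℕ) (hb : ∀ j, 1 ≤ b j) :
    barrierSeqCount b (n + 1) =
      barrierSeqCount (fun j => b j - 1) (n + 1) + barrierSeqCount (fun j => b (j + 1)) n := by
  unfold barrierSeqCount
  have e : {a : Fin (n + 2) → ℕ // Monotone a ∧ ∀ i, a i ≤ b i.1} ≃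
      {a : Fin (n + 2) → ℕ // Monotone a ∧ ∀ i, a i ≤ b i.1 - 1} ⊕
      {a : Fin (n + 1) → ℕ // Monotone a ∧ ∀ i, a i ≤ b (i.1 + 1)} := by
    refine
      { toFun := fun a =>
          if h : a.1 0 = 0 then
            Sum.inr ⟨fun j => a.1 j.succ, ?_, ?_⟩
          else
            Sum.inl ⟨fun i => a.1 i - 1, ?_, ?_⟩
        invFun := Sum.elim
          (fun c => ⟨fun i => c.1 i + 1, ?_, ?_⟩)
          (fun c => ⟨pre n c.1, pre_mono n c.1 c.2.1, ?_⟩)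
        left_inv := ?_
        right_inv := ?_ }
    · intro i j hij
      exact a.2.1 (Fin.succ_le_succ_iff.mpr hij)
    · intro j
      have := a.2.2 j.succ
      simpa using this
    · intro i j hij
      exact Nat.sub_le_sub_right (a.2.1 hij) 1
    · intro i
      exact Nat.sub_le_sub_right (a.2.2 i) 1
    · intro i j hij
      exact Nat.add_le_add_right (c.2.1 hij) 1
    · intro i
      show c.1 i + 1 ≤ b i.1
      have h1 := c.2.2 i
      have h2 := hb i.1
      omega
    · intro i
      unfold pre
      by_cases hi : i.1 = 0
      · simp [hi]
      · simp only [hi, dif_neg, not_false_iff]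
        have := c.2.2 ⟨i.1 - 1, by omega⟩
        simpa [Nat.sub_add_cancel (Nat.one_le_iff_ne_zero.mpr hi)] using this
    · intro a
      by_cases h : a.1 0 = 0
      · simp only [h, dif_pos]
        apply Subtype.ext
        funext i
        show pre n (fun j => a.1 j.succ) i = a.1 i
        unfold pre
        by_cases hi : i.1 = 0
        · have hi0 : i = 0 := Fin.ext hi
          subst hi0
          simp [h]
        · simp only [hi, dif_neg, not_false_iff]
          exact congrArg a.1 (Fin.ext (by simp only [Fin.val_succ]; omega))
      · simp only [h, dif_neg, not_false_iff]
        apply Subtype.ext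
        funext i
        show a.1 i - 1 + 1 = a.1 i
        have : 1 ≤ a.1 i := by
          have h0 : a.1 0 ≤ a.1 i := a.2.1 (Fin.zero_le i)
          omega
        omega
    · intro c
      cases c with
      | inl c =>
        have h0 : c.1 0 + 1 ≠ 0 := by omega
        simp only [Sum.elim_inl, h0, dif_neg, not_false_iff]
        exact congrArg Sum.inl (Subtype.ext (funext fun i => by simp))
      | inr c =>
        have h0 : pre n c.1 0 = 0 := by unfold pre; simp
        simp only [Sum.elim_inr, h0, dif_pos]
        refine congrArg Sum.inr (Subtype.ext (funext fun j => ?_))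
        show pre n c.1 j.succ = c.1 j
        unfold pre
        have hj : (j.succ).1 ≠ 0 := by simp
        simp only [hj, dif_neg, not_false_iff]
        exact congrArg c.1 (Fin.ext (by simp))
  haveI : Finite {a : Fin (n + 2) → ℕ // Monotone a ∧ ∀ i, a i ≤ b i.1 - 1} :=
    barrierFinite (fun j => b j - 1) (n + 1)
  haveI : Finite {a : Fin (n + 1) → ℕ // Monotone a ∧ ∀ i, a i ≤ b (i.1 + 1)} :=
    barrierFinite (fun j => b (j + 1)) n
  rw [Nat.card_congr e, Nat.card_sum]

/-- Tail lemma: if the barrier starts at 0, then `a 0 = 0` is forced. -/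
lemma barrier_tail (b : ℕ → ℕ) (n : ℕ) (hb : b 0 = 0) :
    barrierSeqCount b (n + 1) = barrierSeqCount (fun j => b (j + 1)) n := by
  unfold barrierSeqCount
  have e : {a : Fin (n + 2) → ℕ // Monotone a ∧ ∀ i, a i ≤ b i.1} ≃
      {a : Fin (n + 1) → ℕ // Monotone a ∧ ∀ i, a i ≤ b (i.1 + 1)} := by
    refine
      { toFun := fun a => ⟨fun j => a.1 j.succ, ?_, ?_⟩
        invFun := fun c => ⟨pre n c.1, pre_mono n c.1 c.2.1, ?_⟩
        left_inv := ?_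
        right_inv := ?_ }
    · intro i j hij
      exact a.2.1 (Fin.succ_le_succ_iff.mpr hij)
    · intro j
      have := a.2.2 j.succ
      simpa using this
    · intro i
      unfold pre
      by_cases hi : i.1 = 0
      · simp [hi]
      · simp only [hi, dif_neg, not_false_iff]
        have := c.2.2 ⟨i.1 - 1, by omega⟩
        simpa [Nat.sub_add_cancel (Nat.one_le_iff_ne_zero.mpr hi)] using this
    · intro a
      apply Subtype.ext
      funext i
      show pre n (fun j => a.1 j.succ) i = a.1 i
      unfold pre
      by_cases hi : i.1 = 0
      · have hi0 : i = 0 := Fin.ext hi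
        subst hi0
        have h : a.1 0 = 0 := by have := a.2.2 0; simp [hb] at this ⊢; omega
        simp [h]
      · simp only [hi, dif_neg, not_false_iff]
        exact congrArg a.1 (Fin.ext (by simp only [Fin.val_succ]; omega))
    · intro c
      apply Subtype.ext
      funext j
      show pre n c.1 j.succ = c.1 j
      unfold pre
      have hj : (j.succ).1 ≠ 0 := by simp
      simp only [hj, dif_neg, not_false_iff]
      exact congrArg c.1 (Fin.ext (by simp))
  rw [Nat.card_congr e]

lemma bsc_congr (b b' : ℕ → ℕ) (n : ℕ) (h : ∀ j, b j = b' j) :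
    barrierSeqCount b n = barrierSeqCount b' n := by
  have : b = b' := funext h
  rw [this]

lemma recZero (r n : ℕ) :
    barrierSeqCount (fun j => r * j + 0) (n + 1) = barrierSeqCount (fun j => r * j + r) n := by
  rw [barrier_tail (fun j => r * j + 0) n (by simp)]
  exact bsc_congr _ _ n (fun j => by ring)

lemma recSucc (r s n : ℕ) :
    barrierSeqCount (fun j => r * j + (s + 1)) (n + 1) =
      barrierSeqCount (fun j => r * j + s) (n + 1) +
        barrierSeqCount (fun j => r * j + (r + s + 1)) n := by
  rw [barrier_split (fun j => r * j + (s + 1)) n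
    (fun j => Nat.succ_le_succ (Nat.zero_le _))]
  rw [bsc_congr (fun j => (fun j => r * j + (s + 1)) j - 1) (fun j => r * j + s) (n + 1)
    (fun j => by show r * j + (s + 1) - 1 = r * j + s; omega)]
  rw [bsc_congr (fun j => (fun j => r * j + (s + 1)) (j + 1)) (fun j => r * j + (r + s + 1)) n
    (fun j => by show r * (j + 1) + (s + 1) = r * j + (r + s + 1); ring)]

theorem stmt_6 (r s n : ℕ) :
    (n + 1) * barrierSeqCount (fun j => r * j + s) n =
      (s + 1) * (s + (n + 1) * (r + 1)).choose n := by
  induction n generalizing s with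
  | zero =>
    rw [barrier_base]
    simp
  | succ n ih =>
    induction s with
    | zero =>
      rw [recZero]
      have h1 := ih r
      have h2 := Nat.add_one_mul_choose_eq (r + (n + 1) * (r + 1)) n
      have hidx : 0 + (n + 1 + 1) * (r + 1) = (r + (n + 1) * (r + 1)) + 1 := by ring
      rw [hidx]
      apply Nat.eq_of_mul_eq_mul_left (show 0 < n + 1 by omega)
      set x := barrierSeqCount (fun j => r * j + r) n with hx
      set c := (r + (n + 1) * (r + 1)).choose n with hc
      set d := ((r + (n + 1) * (r + 1)) + 1).choose (n + 1) with hd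
      calc (n + 1) * ((n + 1 + 1) * x) = (n + 2) * ((n + 1) * x) := by ring
        _ = (n + 2) * ((r + 1) * c) := by rw [h1]
        _ = (r + (n + 1) * (r + 1) + 1) * c := by ring
        _ = d * (n + 1) := h2
        _ = (n + 1) * ((0 + 1) * d) := by ring
    | succ s ihs =>
      rw [recSucc]
      have ih' := ih (r + s + 1)
      have hidx : r + s + 1 + (n + 1) * (r + 1) = s + (n + 1 + 1) * (r + 1) := by ring
      rw [hidx] at ih'
      have hpas : (s + (n + 1 + 1) * (r + 1) + 1).choose (n + 1) =
          (s + (n + 1 + 1) * (r + 1)).choose n + (s + (n + 1 + 1) * (r + 1)).choose (n + 1) :=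
        Nat.choose_succ_succ _ _
      have hidx2 : s + 1 + (n + 1 + 1) * (r + 1) = s + (n + 1 + 1) * (r + 1) + 1 := by ring
      rw [hidx2, hpas]
      have hc := Nat.choose_succ_right_eq (s + (n + 1 + 1) * (r + 1)) n
      have hsub : s + (n + 1 + 1) * (r + 1) - n = s + n * r + 2 * r + 2 := by
        have : (n + 1 + 1) * (r + 1) = n * r + n + 2 * r + 2 := by ring
        omega
      rw [hsub] at hc
      apply Nat.eq_of_mul_eq_mul_left (show 0 < n + 1 by omega)
      set x := barrierSeqCount (fun j => r * j + s) (n + 1)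
      set g := barrierSeqCount (fun j => r * j + (r + s + 1)) n
      set c1 := (s + (n + 1 + 1) * (r + 1)).choose n
      set c2 := (s + (n + 1 + 1) * (r + 1)).choose (n + 1)
      zify at ihs ih' hc ⊢
      linear_combination (n + 1 : ℤ) * ihs + (n + 2 : ℤ) * ih' - hc
end

section
/- For the linear barrier b_j = rj + s, the generating function F(x) = ∑_{n≥0} f(n) x^n satisfies the functional equation 1 - (1-x)^{s+1} = x (1-x)^{r+s+1} F(x(1-x)^r) in the ring of formal power series. -/
/-!
Splitting off the first entry `i = a 0` of a sequence below the barrier `r j + t` and subtracting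
it from the others leaves a sequence below the barrier `r j + (r + t - i)`, so with
`F_t(z) = ∑ f_t(n) zⁿ` we get `F_t(z) = t + 1 + z ∑_{i ≤ t} F_{r+t-i}(z)`. Put `z = x(1-x)^r`
and `D_t = 1 - (1-x)^{t+1} - x(1-x)^{r+t+1} F_t(z)`. Since `∑_{i ≤ t} x(1-x)^i = 1 - (1-x)^{t+1}`
and `x(1-x)^{r+t+1} z = x(1-x)^i · x(1-x)^{r+(r+t-i)+1}`, the recursion becomes
`D_t = ∑_{i ≤ t} x(1-x)^i D_{r+t-i}`. Truncating `F` at degree `N` and inducting on `N` for all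
offsets `t` at once shows that `x^{N+1}` divides the truncated defect.
-/

open PowerSeries Finset

section BarrierCount

variable (b : ℕ → ℕ)

theorem finite_barrierSeq (n : ℕ) :
    Finite {a : Fin (n + 1) → ℕ // Monotone a ∧ ∀ i, a i ≤ b i.1} :=
  ((Set.finite_Iic fun i : Fin (n + 1) => b i).subset fun _ ha => ha.2).to_subtype

theorem barrierSeqCount_zero : barrierSeqCount b 0 = b 0 + 1 := by
  have e : {a : Fin 1 → ℕ // Monotone a ∧ ∀ i, a i ≤ b i.1} ≃ Set.Iic (b 0) :=
    (Equiv.funUnique (Fin 1) ℕ).subtypeEquiv fun a => by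
      simp [Subsingleton.monotone a, Fin.forall_fin_one]
  rw [barrierSeqCount, Nat.card_congr e]
  simp

def barrierSeqSuccEquiv (hb : ∀ j, b 0 ≤ b (j + 1)) (n : ℕ) :
    {a : Fin (n + 2) → ℕ // Monotone a ∧ ∀ i, a i ≤ b i.1} ≃
      Σ i : Fin (b 0 + 1), {c : Fin (n + 1) → ℕ // Monotone c ∧ ∀ j, c j ≤ b (j.1 + 1) - i} where
  toFun a := ⟨⟨a.1 0, Nat.lt_succ_of_le (a.2.2 0)⟩, fun j => a.1 j.succ - a.1 0,
    fun j k hjk => Nat.sub_le_sub_right (a.2.1 (Fin.succ_le_succ_iff.2 hjk)) _,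
    fun j => Nat.sub_le_sub_right (a.2.2 j.succ) _⟩
  invFun c := ⟨Fin.cons c.1.1 (fun j => c.2.1 j + c.1),
    monotone_vecCons.2 ⟨Nat.le_add_left _ _, fun j k hjk => Nat.add_le_add_right (c.2.2.1 hjk) _⟩,
    Fin.cases (Nat.lt_succ_iff.1 c.1.2) fun j => by
      have hcj := c.2.2.2 j
      have hbj := hb j
      have hi := Nat.lt_succ_iff.1 c.1.2
      simp only [Fin.cons_succ, Fin.val_succ]
      omega⟩
  left_inv a := by
    ext i
    refine Fin.cases rfl (fun j => ?_) i
    have ha0 := a.2.1 (Fin.zero_le j.succ)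
    simp only [Fin.cons_succ]
    omega
  right_inv c := by
    obtain ⟨i, c, hc⟩ := c
    simp only [Fin.cons_zero, Fin.cons_succ, Nat.add_sub_cancel]
    rfl

theorem barrierSeqCount_succ (hb : ∀ j, b 0 ≤ b (j + 1)) (n : ℕ) :
    barrierSeqCount b (n + 1) =
      ∑ i ∈ range (b 0 + 1), barrierSeqCount (fun j => b (j + 1) - i) n := by
  have := fun i : ℕ => finite_barrierSeq (fun j => b (j + 1) - i) n
  rw [barrierSeqCount, Nat.card_congr (barrierSeqSuccEquiv b hb n), Nat.card_sigma,
    ← Fin.sum_univ_eq_sum_range]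
  rfl

end BarrierCount

theorem barrierSeqCount_linear_succ (r t n : ℕ) :
    barrierSeqCount (fun j => r * j + t) (n + 1) =
      ∑ i ∈ range (t + 1), barrierSeqCount (fun j => r * j + (r + t - i)) n := by
  rw [barrierSeqCount_succ _ (fun j => by simp) n]
  refine sum_congr (by simp) fun i hi => congrArg₂ _ (funext fun j => ?_) rfl
  have hit := mem_range_succ_iff.1 hi
  rw [mul_add_one]
  omega

section PartialSum

variable {R : Type*} [CommRing R]

noncomputable def barrierPartialSum (r t N : ℕ) (z : R) : R :=
  ∑ n ∈ range (N + 1), (barrierSeqCount (fun j => r * j + t) n : ℤ) • z ^ n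

theorem barrierPartialSum_succ (r t N : ℕ) (z : R) :
    barrierPartialSum r t (N + 1) z =
      t + 1 + z * ∑ i ∈ range (t + 1), barrierPartialSum r (r + t - i) N z := by
  rw [barrierPartialSum, sum_range_succ', barrierSeqCount_zero, mul_sum]
  simp_rw [barrierPartialSum, barrierSeqCount_linear_succ, mul_sum, mul_smul_comm, ← pow_succ']
  push_cast
  simp_rw [sum_smul]
  rw [sum_comm]
  simp [add_comm]

theorem one_sub_one_sub_X_pow (k : ℕ) :
    (1 : R⟦X⟧) - (1 - X) ^ k = ∑ i ∈ range k, X * (1 - X) ^ i := by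
  rw [← mul_neg_geom_sum, sub_sub_cancel, mul_sum]

noncomputable def barrierDefect (r t N : ℕ) : R⟦X⟧ :=
  1 - (1 - X) ^ (t + 1) - X * (1 - X) ^ (r + t + 1) * barrierPartialSum r t N (X * (1 - X) ^ r)

theorem barrierDefect_succ (r t N : ℕ) :
    barrierDefect (R := R) r t (N + 1) =
      ∑ i ∈ range (t + 1), X * (1 - X) ^ i * barrierDefect r (r + t - i) N := by
  have term : ∀ i ∈ range (t + 1), X * (1 - X) ^ i * barrierDefect (R := R) r (r + t - i) N =
      X * (1 - X) ^ i - X * (1 - X) ^ (r + t + 1) -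
        X * (1 - X) ^ (r + t + 1) * (X * (1 - X) ^ r) *
          barrierPartialSum r (r + t - i) N (X * (1 - X) ^ r) := by
    intro i hi
    rw [barrierDefect, show r + t + 1 = i + (r + t - i) + 1 by grind]
    ring
  rw [sum_congr rfl term, sum_sub_distrib, sum_sub_distrib, ← one_sub_one_sub_X_pow, sum_const,
    card_range, ← mul_sum, barrierDefect, barrierPartialSum_succ]
  simp only [nsmul_eq_mul]
  push_cast
  ring

theorem X_pow_dvd_barrierDefect (r N t : ℕ) :
    (X : R⟦X⟧) ^ (N + 1) ∣ barrierDefect r t N := by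
  induction N generalizing t with
  | zero =>
    rw [zero_add, pow_one, barrierDefect, one_sub_one_sub_X_pow, mul_assoc]
    exact (dvd_sum fun i _ => dvd_mul_right _ _).sub (dvd_mul_right _ _)
  | succ N ih =>
    rw [barrierDefect_succ, pow_succ']
    exact dvd_sum fun i _ => mul_dvd_mul (dvd_mul_right _ _) (ih _)

end PartialSum

/-- `F(x(1-x)^r)` is truncated at degree `N`: as `x(1-x)^r` has zero constant term, the omitted
terms do not affect the coefficient of `x^N`. -/
theorem stmt_9 (r s : ℕ) :
    ∀ N : ℕ,
      coeff (R := ℤ) N (1 - (1 - X) ^ (s + 1)) =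
        coeff (R := ℤ) N
          (X * (1 - X) ^ (r + s + 1) *
            ∑ n ∈ Finset.range (N + 1),
              (barrierSeqCount (fun j => r * j + s) n : ℤ) • (X * (1 - X) ^ r) ^ n) := by
  intro N
  rw [← sub_eq_zero, ← map_sub]
  exact X_pow_dvd_iff.1 (X_pow_dvd_barrierDefect r N s) N N.lt_succ_self
end

section
/- Let p ∈ (0,1), q = 1 - p, and fix a nondecreasing barrier b : ℕ → ℕ. Then ∑_{n ≥ 0} f(n) · p^{n+1} · q^{b_{n+1}+1} ≤ 1 - q^{b_0+1}, where f(n) is the number of nondecreasing sequences of length n+1 below the barrier. In particular the series converges. -/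
open Finset

open Classical in
noncomputable def barrierFinset (b : ℕ → ℕ) (n : ℕ) : Finset (Fin (n + 1) → ℕ) :=
  (Fintype.piFinset fun i : Fin (n + 1) => Finset.range (b i.1 + 1)).filter
    (fun a => Monotone a ∧ ∀ i, a i ≤ b i.1)

lemma mem_barrierFinset {b : ℕ → ℕ} {n : ℕ} {a : Fin (n + 1) → ℕ} :
    a ∈ barrierFinset b n ↔ Monotone a ∧ ∀ i, a i ≤ b i.1 := by
  classical
  simp only [barrierFinset, Finset.mem_filter, Fintype.mem_piFinset, Finset.mem_range,
    Nat.lt_succ_iff]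
  tauto

lemma barrierSeqCount_eq (b : ℕ → ℕ) (n : ℕ) :
    barrierSeqCount b n = (barrierFinset b n).card := by
  rw [barrierSeqCount]
  have h : {a : Fin (n + 1) → ℕ | Monotone a ∧ ∀ i, a i ≤ b i.1} = ↑(barrierFinset b n) := by
    ext a; simp [mem_barrierFinset]
  rw [show {a : Fin (n + 1) → ℕ // Monotone a ∧ ∀ i, a i ≤ b i.1} =
    ↥{a : Fin (n + 1) → ℕ | Monotone a ∧ ∀ i, a i ≤ b i.1} from rfl,
    Nat.card_coe_set_eq, h, Set.ncard_coe_finset]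

lemma monotone_snoc {N : ℕ} {a : Fin (N + 1) → ℕ} {j : ℕ} (ha : Monotone a)
    (hj : a (Fin.last N) ≤ j) : Monotone (Fin.snoc a j : Fin (N + 2) → ℕ) := by
  intro i k hik
  induction k using Fin.lastCases with
  | last =>
    induction i using Fin.lastCases with
    | last => exact le_refl _
    | cast i =>
      simp only [Fin.snoc_castSucc, Fin.snoc_last]
      exact le_trans (ha (Fin.le_last i)) hj
  | cast k =>
    induction i using Fin.lastCases with
    | last =>
      exfalso
      have h1 : (Fin.last (N + 1) : Fin (N + 2)).val ≤ (Fin.castSucc k).val := hik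
      have h2 : (Fin.castSucc k).val = k.val := rfl
      have h3 : k.val < N + 1 := k.isLt
      simp [Fin.last] at h1; omega
    | cast i =>
      simp only [Fin.snoc_castSucc]
      exact ha (Fin.castSucc_le_castSucc_iff.mp hik)

noncomputable def barrierMass (b : ℕ → ℕ) (p q : ℝ) (n : ℕ) : ℝ :=
  ∑ a ∈ barrierFinset b n, p ^ (n + 1) * q ^ (a (Fin.last n))

lemma barrierMass_zero (b : ℕ → ℕ) (p q : ℝ) (hq : q ≠ 1) (hpq : p = 1 - q) :
    barrierMass b p q 0 = 1 - q ^ (b 0 + 1) := by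
  have h : barrierMass b p q 0 = ∑ j ∈ Finset.range (b 0 + 1), p * q ^ j := by
    rw [barrierMass]
    refine Finset.sum_bij' (fun a _ => a 0) (fun j _ => fun _ => j) ?_ ?_ ?_ ?_ ?_
    · intro a ha
      simp only [Finset.mem_range, Nat.lt_succ_iff]
      exact ((mem_barrierFinset.mp ha).2 0)
    · intro j hj
      rw [mem_barrierFinset]
      refine ⟨monotone_const, fun i => ?_⟩
      simp only [Finset.mem_range, Nat.lt_succ_iff] at hj
      have : i = 0 := Fin.ext (by omega)
      simpa [this]
    · intro a ha
      funext i
      have : i = 0 := Fin.ext (by omega)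
      simp [this]
    · intro j hj; rfl
    · intro a ha
      have : Fin.last 0 = 0 := rfl
      simp [this]
  have h1 : q - 1 ≠ 0 := sub_ne_zero.mpr hq
  rw [h, ← Finset.mul_sum, geom_sum_eq hq, hpq,
    show (1 : ℝ) - q = -(q - 1) from by ring, neg_mul, mul_comm (q - 1),
    div_mul_cancel₀ _ h1]
  ring

lemma barrierMass_succ (b : ℕ → ℕ) (hb : Monotone b) (p q : ℝ) (hq : q ≠ 1) (hpq : p = 1 - q)
    (N : ℕ) :
    barrierMass b p q (N + 1) =
      barrierMass b p q N - (barrierSeqCount b N : ℝ) * p ^ (N + 1) * q ^ (b (N + 1) + 1) := by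
  have key : barrierMass b p q (N + 1) =
      ∑ a ∈ barrierFinset b N, ∑ j ∈ Finset.Icc (a (Fin.last N)) (b (N + 1)),
        p ^ (N + 2) * q ^ j := by
    rw [barrierMass, ← Finset.sum_sigma (barrierFinset b N)
      (fun a => Finset.Icc (a (Fin.last N)) (b (N + 1)))
      (fun x => p ^ (N + 2) * q ^ x.2)]
    refine Finset.sum_bij'
      (fun c _ => (⟨c ∘ Fin.castSucc, c (Fin.last (N + 1))⟩ :
        (_ : Fin (N+1) → ℕ) × ℕ))
      (fun x _ => Fin.snoc x.1 x.2) ?_ ?_ ?_ ?_ ?_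
    · intro c hc
      rw [mem_barrierFinset] at hc
      obtain ⟨hmono, hle⟩ := hc
      refine Finset.mem_sigma.mpr ⟨mem_barrierFinset.mpr ⟨hmono.comp Fin.strictMono_castSucc.monotone, fun i => hle i.castSucc⟩, ?_⟩
      simp only [Finset.mem_Icc]
      exact ⟨hmono ((Fin.castSucc_lt_last _).le), hle (Fin.last (N + 1))⟩
    · rintro ⟨a, j⟩ hx
      rw [Finset.mem_sigma] at hx
      obtain ⟨ha, hj⟩ := hx
      rw [mem_barrierFinset] at ha
      simp only [Finset.mem_Icc] at hj
      rw [mem_barrierFinset]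
      refine ⟨monotone_snoc ha.1 hj.1, fun i => ?_⟩
      induction i using Fin.lastCases with
      | last => simpa using hj.2
      | cast i =>
        simp only [Fin.snoc_castSucc]
        exact ha.2 i
    · intro c hc
      funext i
      induction i using Fin.lastCases with
      | last => simp
      | cast i => simp
    · rintro ⟨a, j⟩ hx
      simp
    · intro c hc
      simp
  rw [key]
  have inner : ∀ a ∈ barrierFinset b N,
      ∑ j ∈ Finset.Icc (a (Fin.last N)) (b (N + 1)), p ^ (N + 2) * q ^ j =
        p ^ (N + 1) * q ^ (a (Fin.last N)) - p ^ (N + 1) * q ^ (b (N + 1) + 1) := by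
    intro a ha
    rw [mem_barrierFinset] at ha
    have hm : a (Fin.last N) ≤ b (N + 1) + 1 :=
      le_trans (ha.2 (Fin.last N)) (le_trans (hb (Nat.le_succ N)) (Nat.le_succ _))
    rw [← Finset.Ico_add_one_right_eq_Icc, ← Finset.mul_sum, geom_sum_Ico hq hm]
    rw [hpq]
    have : (q : ℝ) - 1 ≠ 0 := sub_ne_zero.mpr hq
    field_simp
    ring
  rw [Finset.sum_congr rfl inner, Finset.sum_sub_distrib, barrierMass,
    Finset.sum_const, barrierSeqCount_eq]
  ring

theorem stmt_11 (b : ℕ → ℕ) (hb : Monotone b) (p : ℝ) (hp : p ∈ Set.Ioo (0 : ℝ) 1)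
    (q : ℝ) (hq : q = 1 - p) :
    Summable (fun n : ℕ => (barrierSeqCount b n : ℝ) * p ^ (n + 1) * q ^ (b (n + 1) + 1)) ∧
      ∑' n : ℕ, (barrierSeqCount b n : ℝ) * p ^ (n + 1) * q ^ (b (n + 1) + 1) ≤
        1 - q ^ (b 0 + 1) := by
  obtain ⟨hp0, hp1⟩ := hp
  have hq0 : 0 < q := by rw [hq]; linarith
  have hq1 : q ≠ 1 := by rw [hq]; intro h; linarith [sub_eq_iff_eq_add.mp h]
  have hpq : p = 1 - q := by rw [hq]; ring
  have hterm : ∀ n, 0 ≤ (barrierSeqCount b n : ℝ) * p ^ (n + 1) * q ^ (b (n + 1) + 1) := by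
    intro n
    positivity
  have hA : ∀ N, barrierMass b p q N =
      (1 - q ^ (b 0 + 1)) -
        ∑ n ∈ Finset.range N, (barrierSeqCount b n : ℝ) * p ^ (n + 1) * q ^ (b (n + 1) + 1) := by
    intro N
    induction N with
    | zero => simp [barrierMass_zero b p q hq1 hpq]
    | succ N ih =>
      rw [barrierMass_succ b hb p q hq1 hpq N, ih, Finset.sum_range_succ]
      ring
  have hAnn : ∀ N, 0 ≤ barrierMass b p q N := by
    intro N
    refine Finset.sum_nonneg fun a _ => ?_
    positivity
  have hbound : ∀ N,
      ∑ n ∈ Finset.range N, (barrierSeqCount b n : ℝ) * p ^ (n + 1) * q ^ (b (n + 1) + 1) ≤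
        1 - q ^ (b 0 + 1) := by
    intro N
    have := hAnn N
    rw [hA N] at this
    linarith
  exact ⟨summable_of_sum_range_le hterm hbound, Real.tsum_le_of_sum_range_le hterm hbound⟩
end

section
/- For the i.i.d. Bernoulli walk, if S(k) denotes the number of 1's among the first k coordinates (each coordinate being 1 with probability q and 0 with probability p = 1-q), X(k) = k - S(k), and liminf_n b_n/n > q/p for a nondecreasing barrier b, then with positive probability S(k) ≤ b_{1+X(k)} for all k ≥ 0. -/
/-!
Pick `θ` with `q / p < θ < liminf bₙ / n`, so that `θ n < bₙ` for `n ≥ N`. Since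
`S ≤ θ (k + 1 - S)` is equivalent to `S ≤ α (k + 1)` with `α = θ / (1 + θ) > q`, it suffices
that the walk stays below the line of slope `α` while its horizontal coordinate is at least
`N`. By the strong law of large numbers, some tail `(X (L + t))ₜ` with `L ≥ N` stays below
`α (L + t)` with positive probability; this is independent of the event that the first `L`
steps are all `0`, which also has positive probability, and on both events the walk never
crosses the barrier.
-/

open MeasureTheory ProbabilityTheory

/-- `walkS X k ω` is the number of up-moves (`true`s) among the first `k+1` coordinates. -/
def walkS {Ω : Type*} (X : ℕ → Ω → Bool) (k : ℕ) (ω : Ω) : ℕ :=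
  ∑ j ∈ Finset.range (k + 1), (X j ω).toNat

/-- `walkX X k ω = k - walkS X k ω` is the horizontal coordinate of the lattice path
(started at `(-1,0)`) after `k+1` steps. -/
def walkX {Ω : Type*} (X : ℕ → Ω → Bool) (k : ℕ) (ω : Ω) : ℤ :=
  (k : ℤ) - (walkS X k ω : ℤ)

open Filter Finset

section Deterministic

variable {b : ℕ → ℕ} {θ : ℝ} {N : ℕ}

lemma exists_lt_forall_ge_mul_lt_of_lt_liminf {u : ℕ → ℝ} {c : ℝ}
    (h : (c : EReal) < liminf (fun n : ℕ => ((u n / n : ℝ) : EReal)) atTop) :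
    ∃ θ, c < θ ∧ ∃ N, ∀ n ≥ N, θ * n < u n := by
  obtain ⟨θ, hcθ, hθ⟩ := EReal.exists_between_coe_real h
  obtain ⟨N, hN⟩ := eventually_atTop.1 <|
    (eventually_lt_of_lt_liminf hθ).and (eventually_gt_atTop 0)
  refine ⟨θ, EReal.coe_lt_coe_iff.1 hcθ, N, fun n hn => ?_⟩
  obtain ⟨hlt, hpos⟩ := hN n hn
  exact (lt_div_iff₀ (by exact_mod_cast hpos)).1 (EReal.coe_lt_coe_iff.1 hlt)

lemma sum_range_toNat_le (x : ℕ → Bool) (n : ℕ) : ∑ j ∈ range n, (x j).toNat ≤ n :=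
  (sum_le_sum fun j _ => Bool.toNat_le (x j)).trans (by simp)

lemma le_barrier_of_le_slope (hθ : 0 < θ) (hb : ∀ n ≥ N, θ * n < b n) {u n : ℕ}
    (hu : (u : ℝ) ≤ θ / (1 + θ) * n) (hN : N + u ≤ n) : u ≤ b (n - u) := by
  have hu' : (u : ℝ) ≤ θ * (n - u : ℕ) := by
    rw [div_mul_eq_mul_div, le_div_iff₀ (by linarith)] at hu
    rw [Nat.cast_sub (by omega)]
    linarith
  exact_mod_cast (hu'.trans_lt (hb _ (by omega))).le

lemma sum_range_toNat_le_barrier (hθ : 0 < θ) (hb : ∀ n ≥ N, θ * n < b n) {x : ℕ → Bool}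
    {L : ℕ} (hNL : N ≤ L) (hhead : ∀ i : Fin L, x i = false)
    (htail : ∀ m, ∑ t ∈ range m, ((x (L + t)).toNat : ℝ) ≤ θ / (1 + θ) * (L + m)) (n : ℕ) :
    ∑ j ∈ range n, (x j).toNat ≤ b (n - ∑ j ∈ range n, (x j).toNat) := by
  have hzero : ∀ n ≤ L, ∑ j ∈ range n, (x j).toNat = 0 := fun n hn =>
    sum_eq_zero fun j hj => by rw [hhead ⟨j, by simp at hj; omega⟩]; rfl
  rcases le_total n L with hn | hn
  · simp [hzero n hn]
  obtain ⟨m, rfl⟩ := exists_add_of_le hn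
  rw [sum_range_add, hzero L le_rfl, zero_add]
  refine le_barrier_of_le_slope hθ hb ?_ ?_
  · push_cast
    exact htail m
  · have := sum_range_toNat_le (fun t => x (L + t)) m
    omega

lemma toNat_cast_eq_indicator {α : Type*} (f : α → Bool) (a : α) :
    ((f a).toNat : ℝ) = {a | f a = true}.indicator 1 a := by
  cases h : f a <;> simp [h]

lemma toNat_one_add_walkX {Ω : Type*} (X : ℕ → Ω → Bool) (k : ℕ) (ω : Ω) :
    (1 + walkX X k ω).toNat = k + 1 - walkS X k ω := by
  have := sum_range_toNat_le (X · ω) (k + 1)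
  unfold walkX walkS at *
  omega

end Deterministic

section Probability

variable {Ω : Type*} [MeasurableSpace Ω] {μ : Measure Ω}

lemma exists_pos_measure_forall_ge_sum_range_le [IsProbabilityMeasure μ] {Y : ℕ → Ω → ℝ}
    (hint : Integrable (Y 0) μ) (hindep : Pairwise fun i j => IndepFun (Y i) (Y j) μ)
    (hident : ∀ i, IdentDistrib (Y i) (Y 0) μ μ) {α : ℝ} (hα : μ[Y 0] < α) :
    ∃ K, 0 < μ {ω | ∀ n ≥ K, ∑ i ∈ range n, Y i ω ≤ α * n} := by
  have hev : ∀ᵐ ω ∂μ, ω ∈ ⋃ K, {ω | ∀ n ≥ K, ∑ i ∈ range n, Y i ω ≤ α * n} := by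
    filter_upwards [strong_law_ae_real Y hint hindep hident] with ω hω
    obtain ⟨K, hK⟩ := eventually_atTop.1 <|
      (hω.eventually (eventually_lt_nhds hα)).and (eventually_gt_atTop 0)
    refine Set.mem_iUnion.2 ⟨K, fun n hn => ?_⟩
    obtain ⟨hlt, hpos⟩ := hK n hn
    exact ((div_lt_iff₀ (by exact_mod_cast hpos)).1 hlt).le
  refine exists_measure_pos_of_not_measure_iUnion_null fun h0 => ?_
  exact (hev.and (measure_eq_zero_iff_ae_notMem.1 h0)).exists.elim fun _ h => h.2 h.1

lemma ProbabilityTheory.iIndepFun.indepFun_fin_shift [IsProbabilityMeasure μ] {β : Type*} [MeasurableSpace β]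
    {X : ℕ → Ω → β} (hX : ∀ i, Measurable (X i)) (h : iIndepFun X μ) (L : ℕ) :
    IndepFun (fun ω (i : Fin L) => X i ω) (fun ω t => X (L + t) ω) μ := by
  let m : ℕ → MeasurableSpace Ω := fun i => MeasurableSpace.comap (X i) inferInstance
  have hmeas {S : Set ℕ} {i : ℕ} (hi : i ∈ S) : Measurable[⨆ j ∈ S, m j] (X i) :=
    (comap_measurable (X i)).mono (le_iSup₂ (f := fun j (_ : j ∈ S) => m j) i hi) le_rfl
  rw [IndepFun_iff_Indep]
  refine indep_of_indep_of_le_right (indep_of_indep_of_le_left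
    (indep_iSup_of_disjoint (fun i => (hX i).comap_le) h.iIndep
      (Set.Iio_disjoint_Ici (le_refl L))) ?_) ?_
  · exact ((@measurable_pi_iff _ _ _ (⨆ i ∈ Set.Iio L, m i) _ _).2
      fun i => hmeas (Set.mem_Iio.2 i.2)).comap_le
  · exact ((@measurable_pi_iff _ _ _ (⨆ i ∈ Set.Ici L, m i) _ _).2
      fun t => hmeas (Set.mem_Ici.2 (Nat.le_add_right L t))).comap_le

section Bernoulli

variable {f g : Ω → Bool}

lemma measure_eq_false_eq_one_sub [IsProbabilityMeasure μ] (hf : Measurable f) :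
    μ {ω | f ω = false} = 1 - μ {ω | f ω = true} := by
  have hcompl : {ω | f ω = false} = {ω | f ω = true}ᶜ := by ext; simp
  rw [hcompl, prob_compl_eq_one_sub (show MeasurableSet {ω | f ω = true} from
    hf (measurableSet_singleton true))]

lemma identDistrib_of_measure_eq_true [IsProbabilityMeasure μ] (hf : Measurable f)
    (hg : Measurable g) (h : μ {ω | f ω = true} = μ {ω | g ω = true}) :
    IdentDistrib f g μ μ := by
  refine ⟨hf.aemeasurable, hg.aemeasurable, Measure.ext_iff_singleton.2 fun c => ?_⟩
  rw [Measure.map_apply hf (measurableSet_singleton c),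
    Measure.map_apply hg (measurableSet_singleton c)]
  cases c
  · exact (measure_eq_false_eq_one_sub hf).trans (h ▸ (measure_eq_false_eq_one_sub hg).symm)
  · exact h

lemma integrable_toNat [IsFiniteMeasure μ] (hf : Measurable f) :
    Integrable (fun ω => ((f ω).toNat : ℝ)) μ := by
  simp_rw [toNat_cast_eq_indicator f]
  exact (integrable_const 1).indicator (hf (measurableSet_singleton true))

lemma integral_toNat (hf : Measurable f) :
    ∫ ω, ((f ω).toNat : ℝ) ∂μ = μ.real {ω | f ω = true} := by
  simp_rw [toNat_cast_eq_indicator f]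
  exact integral_indicator_one (hf (measurableSet_singleton true))

end Bernoulli

section BernoulliWalk

variable [IsProbabilityMeasure μ] {X : ℕ → Ω → Bool} {q : ℝ}

lemma exists_ge_pos_measure_forall_sum_shift_le (hX : ∀ i, Measurable (X i))
    (hindep : iIndepFun X μ) (hq : 0 ≤ q) (hdist : ∀ i, μ {ω | X i ω = true} = ENNReal.ofReal q)
    {α : ℝ} (hqα : q < α) (N : ℕ) :
    ∃ L ≥ N, 0 < μ {ω | ∀ m, ∑ t ∈ range m, ((X (L + t) ω).toNat : ℝ) ≤ α * (L + m)} := by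
  set Y : ℕ → Ω → ℝ := fun i ω => ((X (N + i) ω).toNat : ℝ)
  have hφ : Measurable fun c : Bool => (c.toNat : ℝ) := measurable_from_top
  have hmean : μ[Y 0] = q := by
    rw [integral_toNat (hX _), measureReal_def, hdist, ENNReal.toReal_ofReal hq]
  obtain ⟨K, hK⟩ := exists_pos_measure_forall_ge_sum_range_le (integrable_toNat (hX _))
    (fun i j hij => (hindep.indepFun (by omega : N + i ≠ N + j)).comp hφ hφ)
    (fun i => (identDistrib_of_measure_eq_true (hX _) (hX _) (by rw [hdist, hdist])).comp hφ)
    (hmean ▸ hqα)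
  refine ⟨N + K, by omega, hK.trans_le (measure_mono fun ω hω m => ?_)⟩
  have hsum := hω (K + m) (by omega)
  rw [sum_range_add] at hsum
  calc ∑ t ∈ range m, ((X (N + K + t) ω).toNat : ℝ)
      ≤ ∑ i ∈ range K, Y i ω + ∑ t ∈ range m, Y (K + t) ω := by
        simp only [Y, add_assoc]
        exact le_add_of_nonneg_left (sum_nonneg fun _ _ => by positivity)
    _ ≤ α * (K + m) := by exact_mod_cast hsum
    _ ≤ α * ((N + K : ℕ) + m) := by
        have : 0 ≤ α := by linarith
        push_cast
        gcongr
        linarith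

lemma measure_forall_fin_eq_false_pos (hX : ∀ i, Measurable (X i)) (hindep : iIndepFun X μ)
    (hq : q < 1) (hdist : ∀ i, μ {ω | X i ω = true} = ENNReal.ofReal q) (L : ℕ) :
    0 < μ {ω | ∀ i : Fin L, X i ω = false} := by
  have hhead : {ω | ∀ i : Fin L, X i ω = false} = ⋂ i : Fin L, {ω | X i ω = false} := by
    ext; simp
  rw [hhead, (hindep.precomp Fin.val_injective).meas_iInter
    (s := fun i : Fin L => {ω | X i ω = false}) fun i => ⟨{false}, measurableSet_singleton _, rfl⟩]
  refine CanonicallyOrderedAdd.prod_pos.2 fun i _ => ?_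
  rw [measure_eq_false_eq_one_sub (hX i), hdist, tsub_pos_iff_lt]
  exact ENNReal.ofReal_lt_one.2 hq

end BernoulliWalk

end Probability

theorem stmt_14_general {Ω : Type*} [MeasurableSpace Ω] (μ : Measure Ω) [IsProbabilityMeasure μ]
    (q : ℝ) (hq : q ∈ Set.Ioo (0 : ℝ) 1) (p : ℝ) (hp : p = 1 - q)
    (X : ℕ → Ω → Bool) (hmeas : ∀ i, Measurable (X i))
    (hindep : iIndepFun X μ)
    (hdist : ∀ i, μ {ω | X i ω = true} = ENNReal.ofReal q)
    (b : ℕ → ℕ)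
    (hθ : ((q / p : ℝ) : EReal) <
      Filter.liminf (fun n : ℕ => (((b n : ℝ) / n : ℝ) : EReal)) Filter.atTop) :
    0 < μ {ω | ∀ k : ℕ, walkS X k ω ≤ b (1 + walkX X k ω).toNat} := by
  obtain ⟨θ, hqθ, N, hbN⟩ := exists_lt_forall_ge_mul_lt_of_lt_liminf hθ
  have hp0 : 0 < p := by linarith [hq.2]
  have hθ0 : 0 < θ := (div_pos hq.1 hp0).trans hqθ
  have hq_slope : q < θ / (1 + θ) := by
    rw [div_lt_iff₀ hp0, hp] at hqθ
    rw [lt_div_iff₀ (by linarith)]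
    linarith
  obtain ⟨L, hNL, htail⟩ := exists_ge_pos_measure_forall_sum_shift_le hmeas hindep hq.1.le hdist
    hq_slope N
  have hhead := measure_forall_fin_eq_false_pos hmeas hindep hq.2 hdist L
  have hboth := (hindep.indepFun_fin_shift hmeas L).measure_inter_preimage_eq_mul
    {y | ∀ i, y i = false}
    {y | ∀ m, ∑ t ∈ range m, ((y t).toNat : ℝ) ≤ θ / (1 + θ) * (L + m)}
    (by measurability) (by measurability)
  refine (ENNReal.mul_pos hhead.ne' htail.ne').trans_le (hboth ▸ measure_mono ?_)
  rintro ω ⟨hωhead, hωtail⟩ k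
  rw [toNat_one_add_walkX]
  exact sum_range_toNat_le_barrier (x := (X · ω)) hθ0 hbN hNL hωhead hωtail (k + 1)

theorem stmt_14 {Ω : Type*} [MeasurableSpace Ω] (μ : Measure Ω) [IsProbabilityMeasure μ]
    (q : ℝ) (hq : q ∈ Set.Ioo (0 : ℝ) 1) (p : ℝ) (hp : p = 1 - q)
    (X : ℕ → Ω → Bool) (hmeas : ∀ i, Measurable (X i))
    (hindep : iIndepFun X μ)
    (hdist : ∀ i, μ {ω | X i ω = true} = ENNReal.ofReal q)
    (b : ℕ → ℕ) (hb : Monotone b)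
    (hθ : ((q / p : ℝ) : EReal) <
      Filter.liminf (fun n : ℕ => (((b n : ℝ) / n : ℝ) : EReal)) Filter.atTop) :
    0 < μ {ω | ∀ k : ℕ, walkS X k ω ≤ b (1 + walkX X k ω).toNat} :=
  stmt_14_general μ q hq p hp X hmeas hindep hdist b hθ
end

section
/- For each finite nondecreasing sequence a = (a_0 ≤ ... ≤ a_m) with a_i ≤ b_i for all i, the event that the Bernoulli lattice path produces exactly the record sequence a before exiting the barrier (M = m and A = a) has probability exactly p^{m+1} · q^{b_{m+1}+1}. -/
/-!
The event `M = m ∧ A = a` is a cylinder event: it says exactly that the first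
`m + 2 + b (m + 1)` steps spell the word with right moves at the times `a i + i` and up moves
elsewhere. Indeed, the first visit to column `i` is a right move preceded by `a i` up moves, and
since the path leaves from column `m` at height `b (m + 1) + 1`, these `m + 1` right moves are all
the right moves before `τ`. Conversely, along this word the height in column `i - 1` never exceeds
`a i ≤ b i`, so the path exits exactly from column `m`, at height `b (m + 1) + 1`.
Independence of the steps then gives the probability `p ^ (m + 1) * q ^ (b (m + 1) + 1)`.
-/

open MeasureTheory ProbabilityTheory

open Finset

theorem measure_iInter_preimage_bool_eq {ι Ω : Type*} [MeasurableSpace Ω] {μ : Measure Ω}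
    [IsProbabilityMeasure μ] {X : ι → Ω → Bool} {q : ℝ} (hq : 0 ≤ q)
    (hmeas : ∀ i, Measurable (X i)) (hindep : iIndepFun X μ)
    (hdist : ∀ i, μ {ω | X i ω = true} = ENNReal.ofReal q) (s : Finset ι) (w : ι → Bool) :
    μ (⋂ i ∈ s, X i ⁻¹' {w i}) =
      ENNReal.ofReal q ^ #{i ∈ s | w i = true} *
        ENNReal.ofReal (1 - q) ^ #{i ∈ s | w i = false} := by
  have hfalse : ∀ i, μ (X i ⁻¹' {false}) = ENNReal.ofReal (1 - q) := fun i => by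
    have hcompl : X i ⁻¹' {false} = (X i ⁻¹' {true})ᶜ := by ext ω; simp
    rw [hcompl, prob_compl_eq_one_sub (hmeas i (measurableSet_singleton true)),
      ENNReal.ofReal_sub 1 hq, ENNReal.ofReal_one, ← hdist i]
    rfl
  have hone : ∀ i, μ (X i ⁻¹' {w i}) =
      if w i = true then ENNReal.ofReal q else ENNReal.ofReal (1 - q) := fun i => by
    cases w i
    · exact hfalse i
    · exact hdist i
  simp only [hindep.measure_inter_preimage_eq_mul s (fun i _ => measurableSet_singleton (w i)),
    hone, prod_ite, prod_const, Bool.not_eq_true]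

section

variable {Ω : Type*} {X : ℕ → Ω → Bool} {ω : Ω}

theorem walkS_eq_card (k : ℕ) : walkS X k ω = #{j ∈ range (k + 1) | X j ω = true} := by
  simp only [walkS, card_filter]
  exact sum_congr rfl fun j _ => by cases X j ω <;> rfl

theorem walkS_add_card_false (k : ℕ) :
    walkS X k ω + #{j ∈ range (k + 1) | X j ω = false} = k + 1 := by
  simpa [walkS_eq_card k, Bool.not_eq_true] using
    card_filter_add_card_filter_not (s := range (k + 1)) (fun j => X j ω = true)

theorem walkS_succ (k : ℕ) : walkS X (k + 1) ω = walkS X k ω + (X (k + 1) ω).toNat := by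
  simp [walkS, sum_range_succ _ (k + 1)]

theorem walkS_succ_le (k : ℕ) : walkS X (k + 1) ω ≤ walkS X k ω + 1 := by
  rw [walkS_succ]; have := Bool.toNat_le (X (k + 1) ω); omega

theorem walkX_le_succ (k : ℕ) : walkX X k ω ≤ walkX X (k + 1) ω := by
  simp only [walkX, walkS_succ]; have := Bool.toNat_le (X (k + 1) ω); push_cast; omega

theorem eq_false_of_first_visit {j : ℕ} (hnew : ∀ j' < j, walkX X j' ω ≠ walkX X j ω)
    (hnonneg : 0 ≤ walkX X j ω) : X j ω = false := by
  cases j with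
  | zero => simp only [walkX, walkS] at hnonneg; cases h : X 0 ω <;> simp_all
  | succ j =>
    have := hnew j j.lt_succ_self
    simp only [walkX, walkS_succ] at this
    cases h : X (j + 1) ω <;> simp_all

end

section

variable {n : ℕ} {α : Type*} [Preorder α] [DecidableLE α] {f : Fin n → α} {i : Fin n} {j : α}

theorem Monotone.card_filter_le_le_of_lt (hf : Monotone f) (h : j < f i) :
    #{i' | f i' ≤ j} ≤ i := by
  calc #{i' | f i' ≤ j} ≤ #(Iio i) :=
        card_le_card fun i' hi' => by
          simp only [mem_filter, mem_univ, true_and] at hi'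
          exact mem_Iio.2 (lt_of_not_ge fun hle => (h.trans_le ((hf hle).trans hi')).false)
    _ = i := Fin.card_Iio i

theorem Monotone.le_card_filter_le (hf : Monotone f) (h : f i ≤ j) :
    i + 1 ≤ #{i' | f i' ≤ j} := by
  calc i + 1 = #(Iic i) := (Fin.card_Iic i).symm
    _ ≤ #{i' | f i' ≤ j} :=
        card_le_card fun i' hi' => by
          simp only [mem_filter, mem_univ, true_and]
          exact (hf (mem_Iic.1 hi')).trans h

theorem StrictMono.card_filter_le_apply (hf : StrictMono f) : #{i' | f i' ≤ f i} = i + 1 := by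
  simp only [hf.le_iff_le, filter_ge_eq_Iic, Fin.card_Iic]

end

section RecordEvent

variable {m : ℕ}

/-- The path with `A = a` enters column `i` after `i` right moves and `a i` up moves. -/
def entryTime (a : Fin (m + 1) → ℕ) (i : Fin (m + 1)) : ℕ := a i + i

def entryTimes (a : Fin (m + 1) → ℕ) : Finset ℕ := univ.image (entryTime a)

theorem entryTime_strictMono {a : Fin (m + 1) → ℕ} (ha : Monotone a) :
    StrictMono (entryTime a) :=
  fun _ _ h => Nat.add_lt_add_of_le_of_lt (ha h.le) h

theorem card_entryTimes {a : Fin (m + 1) → ℕ} (ha : Monotone a) : #(entryTimes a) = m + 1 := by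
  rw [entryTimes, card_image_of_injective _ (entryTime_strictMono ha).injective, card_univ,
    Fintype.card_fin]

variable {Ω : Type*} {X : ℕ → Ω → Bool} {ω : Ω} {b : ℕ → ℕ} {a : Fin (m + 1) → ℕ}

/-- The event `M = m ∧ A = a`, where `k` is the exit time `τ`. -/
def RecordEvent (X : ℕ → Ω → Bool) (b : ℕ → ℕ) (a : Fin (m + 1) → ℕ) (ω : Ω) : Prop :=
  ∃ k : ℕ,
    b (1 + walkX X k ω).toNat < walkS X k ω ∧
    (∀ j < k, walkS X j ω ≤ b (1 + walkX X j ω).toNat) ∧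
    walkX X k ω = (m : ℤ) ∧
    ∀ i : Fin (m + 1), ∃ j ≤ k, walkX X j ω = (i.1 : ℤ) ∧
      (∀ j' < j, walkX X j' ω ≠ (i.1 : ℤ)) ∧ walkS X j ω = a i

theorem RecordEvent.eq_false_iff (hb : Monotone b) (h : RecordEvent X b a ω) {j : ℕ}
    (hj : j < m + 2 + b (m + 1)) : X j ω = false ↔ j ∈ entryTimes a := by
  obtain ⟨k, hexit, hbefore, hk, hentry⟩ := h
  have hvisit : ∀ i, entryTime a i ≤ k ∧ walkX X (entryTime a i) ω = i ∧
      X (entryTime a i) ω = false := by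
    intro i
    obtain ⟨j, hjk, hji, hnew, hja⟩ := hentry i
    obtain rfl : j = entryTime a i := by simp only [walkX] at hji; simp only [entryTime]; omega
    exact ⟨hjk, hji, eq_false_of_first_visit (fun j' hj' => hji ▸ hnew j' hj') (by omega)⟩
  have hk1 : k - 1 + 1 = k := by simp only [walkX] at hk; omega
  have hSk : walkS X k ω = b (m + 1) + 1 := by
    have hprev := hbefore (k - 1) (by omega)
    have hx := walkX_le_succ (X := X) (ω := ω) (k - 1)
    have hs := walkS_succ_le (X := X) (ω := ω) (k - 1)
    rw [hk1, hk] at hx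
    rw [hk1] at hs
    have := hb (show (1 + walkX X (k - 1) ω).toNat ≤ m + 1 by omega)
    rw [hk, show (1 + (m : ℤ)).toNat = m + 1 by omega] at hexit
    omega
  have hkN : k + 1 = m + 2 + b (m + 1) := by simp only [walkX] at hk; omega
  -- the `m + 1` entry times are right moves, and there are only `m + 1` right moves up to `k`
  have hset : entryTimes a = {j ∈ range (k + 1) | X j ω = false} := by
    apply eq_of_subset_of_card_le
    · simp only [entryTimes, image_subset_iff, mem_filter, mem_range]
      exact fun i _ => ⟨Nat.lt_succ_of_le (hvisit i).1, (hvisit i).2.2⟩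
    · have hinj : Function.Injective (entryTime a) := fun i i' h =>
        Fin.ext (by exact_mod_cast (hvisit i).2.1.symm.trans (h ▸ (hvisit i').2.1))
      have := walkS_add_card_false (X := X) (ω := ω) k
      rw [entryTimes, card_image_of_injective _ hinj, card_univ, Fintype.card_fin]
      simp only [walkX] at hk
      omega
  rw [hset, mem_filter, mem_range]
  exact ⟨fun hfalse => ⟨by omega, hfalse⟩, And.right⟩

theorem entryTime_le (hb : Monotone b) (ha : Monotone a) (hab : ∀ i, a i ≤ b i.1)
    (i : Fin (m + 1)) : entryTime a i ≤ m + 1 + b (m + 1) := by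
  have hlast := hab (Fin.last m)
  have := (entryTime_strictMono ha).monotone (Fin.le_last i)
  have : b m ≤ b (m + 1) := hb (by omega)
  simp only [entryTime, Fin.val_last] at *
  omega

theorem walkS_add_card_filter_entryTime_le (ha : Monotone a) {j : ℕ}
    (hw : ∀ j' ≤ j, (X j' ω = false ↔ j' ∈ entryTimes a)) :
    walkS X j ω + #{i | entryTime a i ≤ j} = j + 1 := by
  have hrights : #{j' ∈ range (j + 1) | X j' ω = false} = #{i | entryTime a i ≤ j} := by
    rw [← card_image_of_injective _ (entryTime_strictMono ha).injective]
    congr 1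
    ext j'
    simp only [mem_filter, mem_range, mem_image, mem_univ, true_and]
    constructor
    · rintro ⟨hj', hfalse⟩
      obtain ⟨i, -, rfl⟩ := mem_image.1 ((hw j' (by omega)).1 hfalse)
      exact ⟨i, by omega, rfl⟩
    · rintro ⟨i, hi, rfl⟩
      exact ⟨by omega, (hw _ hi).2 (mem_image_of_mem _ (mem_univ i))⟩
  rw [← hrights]
  exact walkS_add_card_false j

theorem recordEvent_of_eq_false_iff (hb : Monotone b) (ha : Monotone a)
    (hab : ∀ i, a i ≤ b i.1)
    (hw : ∀ j < m + 2 + b (m + 1), (X j ω = false ↔ j ∈ entryTimes a)) :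
    RecordEvent X b a ω := by
  set k := m + 1 + b (m + 1)
  have hmono := entryTime_strictMono ha
  have hcount : ∀ j ≤ k, walkS X j ω + #{i | entryTime a i ≤ j} = j + 1 := fun j hj =>
    walkS_add_card_filter_entryTime_le ha fun j' hj' => hw j' (by omega)
  have hX : ∀ j ≤ k, walkX X j ω = #{i | entryTime a i ≤ j} - 1 := fun j hj => by
    have := hcount j hj
    simp only [walkX]
    omega
  have hentries := entryTime_le hb ha hab
  have hck : #{i | entryTime a i ≤ k} = m + 1 := by
    rw [filter_true_of_mem fun i _ => hentries i, card_univ, Fintype.card_fin]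
  have hXk : walkX X k ω = m := by
    rw [hX k le_rfl, hck]
    push_cast
    ring
  refine ⟨k, ?_, fun j hj => ?_, hXk, fun i => ?_⟩
  · have := hcount k le_rfl
    rw [hXk, show (1 + (m : ℤ)).toNat = m + 1 by omega]
    omega
  · have hc := hcount j hj.le
    rw [hX j hj.le]
    set t := #{i | entryTime a i ≤ j}
    rw [show (1 + ((t : ℤ) - 1)).toNat = t by omega]
    by_cases htm : t ≤ m
    · have hlt : j < entryTime a ⟨t, by omega⟩ := lt_of_not_ge fun hle => by
        have := hmono.monotone.le_card_filter_le hle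
        simp only at this
        omega
      have := hab ⟨t, by omega⟩
      simp only [entryTime] at hlt this
      omega
    · have : t ≤ m + 1 := by simpa using card_le_univ (filter (fun i => entryTime a i ≤ j) univ)
      rw [show t = m + 1 by omega]
      omega
  · refine ⟨entryTime a i, hentries i, ?_, fun j' hj' => ?_, ?_⟩
    · rw [hX _ (hentries i), hmono.card_filter_le_apply]
      push_cast
      ring
    · rw [hX j' (by have := hentries i; omega)]
      have := hmono.monotone.card_filter_le_le_of_lt hj'
      omega
    · have := hcount _ (hentries i)
      rw [hmono.card_filter_le_apply] at this
      have : entryTime a i = a i + i := rfl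
      omega

theorem setOf_recordEvent_eq (hb : Monotone b) (ha : Monotone a) (hab : ∀ i, a i ≤ b i.1) :
    {ω | RecordEvent X b a ω} =
      ⋂ j ∈ range (m + 2 + b (m + 1)), X j ⁻¹' {decide (j ∉ entryTimes a)} := by
  ext ω
  simp only [Set.mem_ofPred_eq, Set.mem_iInter, Set.mem_preimage, Set.mem_singleton_iff,
    mem_range]
  have hbool : ∀ j, X j ω = decide (j ∉ entryTimes a) ↔ (X j ω = false ↔ j ∈ entryTimes a) :=
    fun j => by cases X j ω <;> by_cases j ∈ entryTimes a <;> simp [*]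
  simp only [hbool]
  exact ⟨fun h _ hj => h.eq_false_iff hb hj, recordEvent_of_eq_false_iff hb ha hab⟩

end RecordEvent

/-- The event that the walk exits the barrier at a time when its horizontal coordinate is
exactly `m` (so `M = m`), having first entered each column `i ≤ m` at height `a i`
(so `A = a`), has probability `p^(m+1) * q^(b (m+1) + 1)`. -/
theorem stmt_16 {Ω : Type*} [MeasurableSpace Ω] (μ : Measure Ω) [IsProbabilityMeasure μ]
    (q : ℝ) (hq : q ∈ Set.Ioo (0 : ℝ) 1) (p : ℝ) (hp : p = 1 - q)
    (X : ℕ → Ω → Bool) (hmeas : ∀ i, Measurable (X i))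
    (hindep : iIndepFun X μ)
    (hdist : ∀ i, μ {ω | X i ω = true} = ENNReal.ofReal q)
    (b : ℕ → ℕ) (hb : Monotone b)
    (m : ℕ) (a : Fin (m + 1) → ℕ) (ha : Monotone a) (hab : ∀ i, a i ≤ b i.1) :
    μ {ω | ∃ k : ℕ,
        b (1 + walkX X k ω).toNat < walkS X k ω ∧
        (∀ j < k, walkS X j ω ≤ b (1 + walkX X j ω).toNat) ∧
        walkX X k ω = (m : ℤ) ∧
        ∀ i : Fin (m + 1), ∃ j ≤ k, walkX X j ω = (i.1 : ℤ) ∧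
          (∀ j' < j, walkX X j' ω ≠ (i.1 : ℤ)) ∧ walkS X j ω = a i} =
      ENNReal.ofReal (p ^ (m + 1) * q ^ (b (m + 1) + 1)) := by
  have hq0 : 0 ≤ q := hq.1.le
  have hp0 : 0 ≤ p := by linarith [hq.2]
  set N := m + 2 + b (m + 1)
  have hE : entryTimes a ⊆ range N := by
    simp only [entryTimes, image_subset_iff, mem_range]
    exact fun i _ => by have := entryTime_le hb ha hab i; omega
  have hrights : #{j ∈ range N | decide (j ∉ entryTimes a) = false} = m + 1 := by
    simp only [decide_eq_false_iff_not, not_not]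
    rw [filter_mem_eq_inter, inter_eq_right.2 hE, card_entryTimes ha]
  have hups : #{j ∈ range N | decide (j ∉ entryTimes a) = true} = b (m + 1) + 1 := by
    have := card_filter_add_card_filter_not (s := range N)
      (fun j => decide (j ∉ entryTimes a) = true)
    simp only [Bool.not_eq_true, card_range, hrights] at this
    omega
  calc _ = μ (⋂ j ∈ range N, X j ⁻¹' {decide (j ∉ entryTimes a)}) :=
        congrArg μ (setOf_recordEvent_eq hb ha hab)
    _ = _ := by
      rw [measure_iInter_preimage_bool_eq hq0 hmeas hindep hdist, hups, hrights, ← hp,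
        ← ENNReal.ofReal_pow hq0, ← ENNReal.ofReal_pow hp0, ← ENNReal.ofReal_mul (by positivity),
        mul_comm]
end

section
/- For the barrier b_j = rj + s, the function g(n) = ((s+1)/(n+1)) · binom(s+(n+1)(r+1), n) satisfies the recurrence g(k) = (-1)^k binom(s+1, k+1) + ∑_{m=0}^{k-1} (-1)^{m+k+1} binom(r(m+1)+s+1, k-m) · g(m) for all k ≥ 0, with the convention arising from b_{m+1}+1 = r(m+1)+s+1. -/
/-!
`g m` is the Raney number `R_{r+1, s+1}(m+1)`, where `R_{p,σ}(n) = σ/(pn+σ) · C(pn+σ, n)`.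
These satisfy `R_p(σ+1, n+1) = R_p(σ, n+1) + R_p(σ+p, n)`, and with Pascal's rule this gives,
by induction on `K` and then on `σ`, the convolution identity
`∑_{j ≤ K} (-1)^j R_{r+1,σ}(j) C(rj+t, K-j) = C(t-σ, K)` for every rational `t`
(generalized binomial coefficients). For `σ = t = s+1` and `K = k+1` the right side is
`C(0, k+1) = 0`; isolating the term `j = k+1` is the recurrence.
-/

open Finset

/-- The case distinction gives `R_p(0, 0) = 1`, where the formula would read `0 / 0`. -/
def raney (p σ n : ℕ) : ℚ :=
  if n = 0 then 1 else σ / (p * n + σ) * ((p * n + σ).choose n : ℚ)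

@[simp] lemma raney_zero_right (p σ : ℕ) : raney p σ 0 = 1 := if_pos rfl

@[simp] lemma raney_zero_succ (p n : ℕ) : raney p 0 (n + 1) = 0 := by simp [raney]

lemma raney_succ (p σ n : ℕ) :
    raney p σ (n + 1) = σ / (p * (n + 1) + σ) * ((p * (n + 1) + σ).choose (n + 1) : ℚ) := by
  simp [raney]

lemma raney_add_self {p : ℕ} (hp : 0 < p) (σ n : ℕ) :
    raney p (σ + p) n = (σ + p) / (p * (n + 1) + σ) * ((p * (n + 1) + σ).choose n : ℚ) := by
  have hN : (p : ℚ) * (n + 1) + σ ≠ 0 := by positivity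
  rcases n with _ | n
  · simp only [raney_zero_right, Nat.choose_zero_right, Nat.cast_one, mul_one]
    field_simp
    ring
  · rw [raney_succ, show p * (n + 1) + (σ + p) = p * (n + 1 + 1) + σ by ring]
    push_cast
    ring_nf

lemma raney_succ_succ {p : ℕ} (hp : 0 < p) (σ n : ℕ) :
    raney p (σ + 1) (n + 1) = raney p σ (n + 1) + raney p (σ + p) n := by
  rw [raney_succ, raney_succ, raney_add_self hp,
    show p * (n + 1) + (σ + 1) = p * (n + 1) + σ + 1 by ring]
  set N := p * (n + 1) + σ with hN
  have hNq : (N : ℚ) = p * (n + 1) + σ := by rw [hN]; push_cast; ring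
  have hN0 : (N : ℚ) ≠ 0 := by rw [hNq]; positivity
  have hN1 : (N : ℚ) + 1 ≠ 0 := by positivity
  have hnN : n ≤ N := by rw [hN]; nlinarith
  have hpascal : ((N + 1).choose (n + 1) : ℚ) = N.choose n + N.choose (n + 1) := by
    rw [Nat.choose_succ_succ]; push_cast; ring
  have hratio : (N.choose (n + 1) : ℚ) * (n + 1) = N.choose n * (N - n) := by
    have h := congrArg (Nat.cast (R := ℚ)) (Nat.choose_succ_right_eq N n)
    push_cast [hnN] at h
    exact h
  rw [hpascal]
  push_cast
  rw [← hNq, show (p : ℚ) * (n + 1) + (σ + 1) = N + 1 by rw [hNq]; ring,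
    show (σ : ℚ) = N - p * (n + 1) by rw [hNq]; ring]
  field_simp
  linear_combination (p : ℚ) * hratio

lemma sum_raney_mul_choose_succ (r σ K : ℕ) (t : ℚ) :
    ∑ j ∈ range (K + 2), (-1) ^ j * raney (r + 1) σ j * Ring.choose (r * j + t) (K + 1 - j) =
      Ring.choose t (K + 1) + ∑ j ∈ range (K + 1),
        (-1) ^ (j + 1) * raney (r + 1) σ (j + 1) * Ring.choose (r * (j + 1) + t) (K - j) := by
  rw [sum_range_succ']
  simp [add_comm]

theorem sum_raney_mul_choose (r K σ : ℕ) (t : ℚ) :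
    ∑ j ∈ range (K + 1), (-1) ^ j * raney (r + 1) σ j * Ring.choose (r * j + t) (K - j) =
      Ring.choose (t - σ) K := by
  induction K generalizing σ t with
  | zero => simp
  | succ K ihK =>
    induction σ generalizing t with
    | zero =>
      rw [sum_raney_mul_choose_succ]
      simp
    | succ σ ihσ =>
      have hsplit : ∀ j ∈ range (K + 1),
          (-1) ^ (j + 1) * raney (r + 1) (σ + 1) (j + 1) * Ring.choose (r * (j + 1) + t) (K - j) =
            (-1) ^ (j + 1) * raney (r + 1) σ (j + 1) * Ring.choose (r * (j + 1) + t) (K - j) -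
              (-1) ^ j * raney (r + 1) (σ + (r + 1)) j * Ring.choose (r * j + (t + r)) (K - j) := by
        intro j _
        rw [raney_succ_succ (by omega), show (r : ℚ) * (j + 1) + t = r * j + (t + r) by ring]
        ring
      rw [sum_raney_mul_choose_succ, sum_congr rfl hsplit, sum_sub_distrib, ihK,
        ← add_sub_assoc, ← sum_raney_mul_choose_succ, ihσ]
      push_cast
      rw [show t + r - (σ + (r + 1)) = t - (σ + 1) by ring, show t - σ = t - (σ + 1) + 1 by ring,
        Ring.choose_succ_succ]
      ring

lemma raney_succ_succ_eq_div_mul_choose (p σ n : ℕ) :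
    raney p (σ + 1) (n + 1) = (σ + 1) / (n + 1) * ((σ + (n + 1) * p).choose n : ℚ) := by
  rw [raney_succ, show p * (n + 1) + (σ + 1) = σ + (n + 1) * p + 1 by ring]
  have h := congrArg (Nat.cast (R := ℚ)) (Nat.add_one_mul_choose_eq (σ + (n + 1) * p) n)
  push_cast at h ⊢
  field_simp
  linear_combination -h

theorem stmt_17 (r s : ℕ)
    (g : ℕ → ℚ)
    (hg : ∀ n : ℕ, g n = ((s : ℚ) + 1) / ((n : ℚ) + 1) * ((s + (n + 1) * (r + 1)).choose n : ℚ)) :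
    ∀ k : ℕ,
      g k = (-1) ^ k * ((s + 1).choose (k + 1) : ℚ) +
        ∑ m ∈ Finset.range k,
          (-1) ^ (m + k + 1) * ((r * (m + 1) + s + 1).choose (k - m) : ℚ) * g m := by
  intro k
  have hg_raney (m : ℕ) : g m = raney (r + 1) (s + 1) (m + 1) := by
    rw [hg, raney_succ_succ_eq_div_mul_choose]
  have hvanish := sum_raney_mul_choose r (k + 1) (s + 1) (s + 1 : ℕ)
  rw [sub_self, Ring.choose_zero_succ, sum_raney_mul_choose_succ, sum_range_succ,
    Nat.sub_self, Ring.choose_zero_right, ← hg_raney, Ring.choose_natCast] at hvanish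
  have hterm : ∀ m ∈ range k, (-1) ^ (m + k + 1) * ((r * (m + 1) + s + 1).choose (k - m) : ℚ) * g m =
      (-1) ^ k * ((-1) ^ (m + 1) * raney (r + 1) (s + 1) (m + 1) *
        Ring.choose (r * (m + 1) + ((s + 1 : ℕ) : ℚ)) (k - m)) := by
    intro m _
    rw [hg_raney, show (r : ℚ) * (m + 1) + (s + 1 : ℕ) = (r * (m + 1) + s + 1 : ℕ) by push_cast; ring,
      Ring.choose_natCast]
    ring
  have hpow : (-1 : ℚ) ^ k * (-1) ^ (k + 1) = -1 := by
    rw [← pow_add]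
    exact Odd.neg_one_pow ⟨k, by ring⟩
  rw [sum_congr rfl hterm, ← mul_sum]
  linear_combination -(-1) ^ k * hvanish + g k * hpow
end
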